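/- arXiv:1508.04784 — 7 statements merged into one kernel-verified Lean document; each statement's English description precedes it below -/
import Mathlib

section
/- Let N ≥ 1, let A be a nonempty bounded subset of ℝ^N and let δ > 0. Then the distance zeta function ζ_A(s) = ∫_{A_δ} d(x,A)^{s−N} dx is well defined (the integral converges absolutely) and is holomorphic as a function of s on the open half-plane {s ∈ ℂ : Re s > dim̄_B A}. -/
/-!
For `σ > dim̄_B A` the Minkowski content gives `|A_t| ≤ t^(N-σ)` for small `t`, i.e. on `A_δ` the
distance `d = d(·, A)` satisfies `|{d < t}| ≤ t^(N-σ)`. The layer-cake formula turns this decay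
into integrability of `d^p` on `A_δ` for every `p > dim̄_B A - N`, and `|d^(s-N)| = d^(Re s - N)`.
Holomorphy is differentiation under the integral sign: near `s₀` the derivative `d^(s-N) log d`
is dominated by `d^(Re s₀ - N - 2ε) + d^(Re s₀ - N + 2ε)`. On `{d = 0}` the integrand `0^(s-N)`
fails to be differentiable only at `s = N`; this matters only when `dim̄_B A < N`, and then the
same decay shows that `{d = 0}` is a null set.
-/

open MeasureTheory Metric Filter Set
open scoped ENNReal Topology

/-- The upper `r`-dimensional Minkowski content of a subset of `ℝ^N`. -/
noncomputable def upperMink (N : ℕ) (A : Set (EuclideanSpace ℝ (Fin N))) (r : ℝ) : ℝ≥0∞ :=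
  Filter.limsup (fun t : ℝ => volume (thickening t A) / ENNReal.ofReal (t ^ ((N : ℝ) - r)))
    (𝓝[>] (0 : ℝ))

/-- The upper box (Minkowski) dimension of a subset of `ℝ^N`. -/
noncomputable def upperBoxDim (N : ℕ) (A : Set (EuclideanSpace ℝ (Fin N))) : ℝ :=
  sInf {r : ℝ | 0 < r ∧ upperMink N A r = 0}

lemma Real.abs_log_le_rpow_add_rpow_div {x ε : ℝ} (hx : 0 ≤ x) (hε : 0 < ε) :
    |Real.log x| ≤ (x ^ (-ε) + x ^ ε) / ε := by
  have hup : Real.log x ≤ x ^ ε / ε := Real.log_le_rpow_div hx hε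
  have hlow : -Real.log x ≤ x ^ (-ε) / ε := by
    simpa [Real.log_inv, Real.inv_rpow hx, Real.rpow_neg hx] using
      Real.log_le_rpow_div (inv_nonneg.2 hx) hε
  have := div_nonneg (Real.rpow_nonneg hx (-ε)) hε.le
  have := div_nonneg (Real.rpow_nonneg hx ε) hε.le
  rw [abs_le, add_div]
  constructor <;> linarith

lemma Real.rpow_le_rpow_add_rpow {x a b c : ℝ} (hx : 0 < x) (hab : a ≤ b) (hbc : b ≤ c) :
    x ^ b ≤ x ^ a + x ^ c := by
  rcases le_total x 1 with h | h
  · linarith [Real.rpow_le_rpow_of_exponent_ge hx h hab, Real.rpow_nonneg hx.le c]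
  · linarith [Real.rpow_le_rpow_of_exponent_le h hbc, Real.rpow_nonneg hx.le a]

lemma Complex.norm_ofReal_cpow_le {x : ℝ} (hx : 0 ≤ x) (w : ℂ) : ‖(x : ℂ) ^ w‖ ≤ x ^ w.re :=
  (Complex.norm_cpow_le _ _).trans_eq <| by
    simp [Complex.arg_ofReal_of_nonneg hx, abs_of_nonneg hx]

lemma Complex.norm_ofReal_cpow_mul_log_le {x ε : ℝ} (hx : 0 ≤ x) (hε : 0 < ε) {w₀ w : ℂ}
    (hw : ‖w - w₀‖ < ε) :
    ‖(x : ℂ) ^ w * Complex.log x‖ ≤ 2 * (x ^ (w₀.re - 2 * ε) + x ^ (w₀.re + 2 * ε)) / ε := by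
  rcases hx.eq_or_lt with rfl | hx
  · simp only [Complex.ofReal_zero, Complex.log_zero, mul_zero, norm_zero]
    positivity
  have hre := abs_lt.1 (show |w.re - w₀.re| < ε by
    simpa using (Complex.abs_re_le_norm (w - w₀)).trans_lt hw)
  rw [norm_mul, Complex.norm_cpow_eq_rpow_re_of_pos hx, ← Complex.ofReal_log hx.le,
    Complex.norm_real, Real.norm_eq_abs]
  calc x ^ w.re * |Real.log x| ≤ x ^ w.re * ((x ^ (-ε) + x ^ ε) / ε) :=
        mul_le_mul_of_nonneg_left (Real.abs_log_le_rpow_add_rpow_div hx.le hε)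
          (Real.rpow_nonneg hx.le _)
    _ = (x ^ (w.re + -ε) + x ^ (w.re + ε)) / ε := by
        rw [mul_div_assoc', mul_add, Real.rpow_add hx, Real.rpow_add hx]
    _ ≤ 2 * (x ^ (w₀.re - 2 * ε) + x ^ (w₀.re + 2 * ε)) / ε := by
        gcongr
        linarith [Real.rpow_le_rpow_add_rpow hx (a := w₀.re - 2 * ε) (b := w.re + -ε)
            (c := w₀.re + 2 * ε) (by linarith) (by linarith),
          Real.rpow_le_rpow_add_rpow hx (a := w₀.re - 2 * ε) (b := w.re + ε)
            (c := w₀.re + 2 * ε) (by linarith) (by linarith)]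

lemma ENNReal.tendsto_ofReal_rpow_nhdsGT_zero {c : ℝ} (hc : 0 < c) :
    Tendsto (fun t : ℝ => ENNReal.ofReal (t ^ c)) (𝓝[>] 0) (𝓝 0) := by
  have h := (ENNReal.continuous_ofReal.comp (Real.continuous_rpow_const hc.le)).tendsto 0
  simpa [Function.comp_def, Real.zero_rpow hc.ne'] using h.mono_left nhdsWithin_le_nhds

section Thickening

variable {X : Type*} [PseudoMetricSpace X] {E : Set X} {x : X} {δ : ℝ}

lemma Metric.nonempty_of_mem_thickening (hx : x ∈ thickening δ E) : E.Nonempty :=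
  nonempty_iff_ne_empty.2 fun hE => by simp [hE] at hx

lemma Metric.infDist_lt_of_mem_thickening (hx : x ∈ thickening δ E) : infDist x E < δ :=
  (mem_thickening_iff_infDist_lt (nonempty_of_mem_thickening hx)).1 hx

end Thickening

section PowerIntegrals

variable {α : Type*} [MeasurableSpace α] {μ : Measure α} {f : α → ℝ}

lemma ae_pos_of_measure_lt_le_rpow {q : ℝ} (hq : 0 < q)
    (hdecay : ∀ᶠ t in 𝓝[>] 0, μ {x | f x < t} ≤ ENNReal.ofReal (t ^ q)) :
    ∀ᵐ x ∂μ, 0 < f x := by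
  refine ae_iff.2 (le_antisymm (ge_of_tendsto (ENNReal.tendsto_ofReal_rpow_nhdsGT_zero hq) ?_)
    bot_le)
  filter_upwards [hdecay, self_mem_nhdsWithin] with t ht ht0
  exact (measure_mono fun x hx => (not_lt.1 hx).trans_lt ht0).trans ht

/-- Layer cake: `∫ f^p = -p ∫_0^∞ μ{f < t⁻¹} t^(-p-1) dt`; the decay hypothesis controls the
part `t > T`, the finiteness of `μ` the rest. -/
lemma integrable_rpow_of_measure_lt_le_rpow [IsFiniteMeasure μ] (hf : AEMeasurable f μ)
    (hf0 : ∀ x, 0 ≤ f x) {p q : ℝ}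
    (hdecay : ∀ᶠ t in 𝓝[>] 0, μ {x | f x < t} ≤ ENNReal.ofReal (t ^ q))
    (hqp : -q < p) (hp : p < 0) :
    Integrable (fun x => f x ^ p) μ := by
  refine ⟨(hf.pow_const p).aestronglyMeasurable, ?_⟩
  rw [hasFiniteIntegral_iff_ofReal (ae_of_all _ fun x => Real.rpow_nonneg (hf0 x) p)]
  have hinv : ∀ x, f x ^ p = (f x)⁻¹ ^ (-p) := fun x => by
    rw [Real.inv_rpow (hf0 x), Real.rpow_neg (hf0 x), inv_inv]
  simp_rw [hinv]
  rw [lintegral_rpow_eq_lintegral_meas_lt_mul μ (ae_of_all _ fun x => inv_nonneg.2 (hf0 x))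
    hf.inv (neg_pos.2 hp)]
  refine ENNReal.mul_lt_top ENNReal.ofReal_lt_top ?_
  obtain ⟨T, hT⟩ := eventually_atTop.1 (tendsto_inv_atTop_nhdsGT_zero.eventually hdecay)
  have hT1 : (0 : ℝ) < max T 1 := lt_max_of_lt_right one_pos
  rw [← Ioc_union_Ioi_eq_Ioi hT1.le]
  refine (lintegral_union_le _ _ _).trans_lt (ENNReal.add_lt_top.2 ⟨?_, ?_⟩)
  · calc ∫⁻ t in Ioc 0 (max T 1), μ {x | t < (f x)⁻¹} * ENNReal.ofReal (t ^ (-p - 1))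
        ≤ ∫⁻ t in Ioc 0 (max T 1), μ univ * ENNReal.ofReal (t ^ (-p - 1)) :=
          lintegral_mono fun t => mul_le_mul_left (measure_mono (subset_univ _)) _
      _ = μ univ * ∫⁻ t in Ioc 0 (max T 1), ENNReal.ofReal (t ^ (-p - 1)) :=
          lintegral_const_mul _ (by fun_prop)
      _ < ⊤ := ENNReal.mul_lt_top (measure_lt_top μ univ)
          (intervalIntegral.intervalIntegrable_rpow' (by linarith)).1.setLIntegral_lt_top
  · calc ∫⁻ t in Ioi (max T 1), μ {x | t < (f x)⁻¹} * ENNReal.ofReal (t ^ (-p - 1))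
        ≤ ∫⁻ t in Ioi (max T 1), ENNReal.ofReal (t ^ (-p - 1 - q)) := by
          refine setLIntegral_mono' measurableSet_Ioi fun t ht => ?_
          have ht0 : 0 < t := hT1.trans ht
          have hsub : {x | t < (f x)⁻¹} ⊆ {x | f x < t⁻¹} := fun x hx =>
            (lt_inv_comm₀ (inv_pos.1 (ht0.trans hx)) ht0).2 hx
          calc μ {x | t < (f x)⁻¹} * ENNReal.ofReal (t ^ (-p - 1))
              ≤ ENNReal.ofReal (t⁻¹ ^ q) * ENNReal.ofReal (t ^ (-p - 1)) :=
                mul_le_mul_left ((measure_mono hsub).trans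
                  (hT t ((le_max_left _ _).trans ht.le))) _
            _ = ENNReal.ofReal (t ^ (-p - 1 - q)) := by
                rw [← ENNReal.ofReal_mul (Real.rpow_nonneg (inv_nonneg.2 ht0.le) _),
                  Real.inv_rpow ht0.le, ← Real.rpow_neg ht0.le, ← Real.rpow_add ht0]
                ring_nf
      _ < ⊤ := (integrableOn_Ioi_rpow_of_lt (by linarith) hT1).setLIntegral_lt_top

lemma integrable_ofReal_cpow (hf : AEMeasurable f μ) (hf0 : ∀ x, 0 ≤ f x) {w : ℂ}
    (h : Integrable (fun x => f x ^ w.re) μ) : Integrable (fun x => (f x : ℂ) ^ w) μ :=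
  h.mono' ((Complex.measurable_ofReal.comp_aemeasurable hf).pow_const w).aestronglyMeasurable
    (ae_of_all _ fun x => Complex.norm_ofReal_cpow_le (hf0 x) w)

lemma differentiableOn_integral_ofReal_cpow (hf : AEMeasurable f μ) (hf0 : ∀ x, 0 ≤ f x)
    {a : ℝ} (hint : ∀ p, a < p → Integrable (fun x => f x ^ p) μ)
    (hzero : 0 ≤ a ∨ ∀ᵐ x ∂μ, 0 < f x) :
    DifferentiableOn ℂ (fun w : ℂ => ∫ x, (f x : ℂ) ^ w ∂μ) {w | a < w.re} := by
  rintro w₀ (hw₀ : a < w₀.re)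
  set ε := (w₀.re - a) / 4 with hε_def
  have hε : 0 < ε := by rw [hε_def]; linarith
  have hF : AEMeasurable (fun x => (f x : ℂ)) μ := Complex.measurable_ofReal.comp_aemeasurable hf
  have hcpow_ne : ∀ᵐ x ∂μ, ∀ w ∈ ball w₀ ε, (f x : ℂ) ≠ 0 ∨ w ≠ 0 := by
    rcases hzero with ha | hpos
    · refine ae_of_all _ fun x w hw => Or.inr ?_
      rintro rfl
      have := (Complex.abs_re_le_norm (0 - w₀)).trans_lt (mem_ball_iff_norm.1 hw)
      rw [zero_sub, Complex.neg_re, abs_neg, abs_of_pos (by linarith)] at this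
      linarith
    · exact hpos.mono fun x hx _ _ => Or.inl (Complex.ofReal_ne_zero.2 hx.ne')
  refine (hasDerivAt_integral_of_dominated_loc_of_deriv_le (ball_mem_nhds w₀ hε)
    (F' := fun w x => (f x : ℂ) ^ w * Complex.log (f x))
    (bound := fun x => 2 * (f x ^ (w₀.re - 2 * ε) + f x ^ (w₀.re + 2 * ε)) / ε)
    (Eventually.of_forall fun w => (hF.pow_const w).aestronglyMeasurable)
    (integrable_ofReal_cpow hf hf0 (hint _ hw₀))
    ((hF.pow_const w₀).mul (Complex.measurable_log.comp_aemeasurable hF)).aestronglyMeasurable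
    (ae_of_all _ fun x w hw =>
      Complex.norm_ofReal_cpow_mul_log_le (hf0 x) hε (mem_ball_iff_norm.1 hw))
    (((hint _ (by linarith)).add (hint _ (by linarith))).const_mul 2 |>.div_const ε)
    (hcpow_ne.mono fun x hx w hw =>
      (Complex.hasStrictDerivAt_const_cpow (hx w hw)).hasDerivAt)).2.differentiableAt
    |>.differentiableWithinAt

end PowerIntegrals

section BoxDimension

variable {N : ℕ} {A : Set (EuclideanSpace ℝ (Fin N))}

lemma upperMink_eq_zero_of_lt (hb : Bornology.IsBounded A) {r : ℝ} (hr : (N : ℝ) < r) :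
    upperMink N A r = 0 := by
  refine Tendsto.limsup_eq ?_
  have hlim : Tendsto (fun t : ℝ => volume (thickening 1 A) * ENNReal.ofReal (t ^ (r - N)))
      (𝓝[>] 0) (𝓝 0) := by
    simpa using ENNReal.Tendsto.const_mul (ENNReal.tendsto_ofReal_rpow_nhdsGT_zero (sub_pos.2 hr))
      (Or.inr hb.thickening.measure_lt_top.ne)
  refine tendsto_of_tendsto_of_tendsto_of_le_of_le' tendsto_const_nhds hlim
    (Eventually.of_forall fun _ => bot_le) ?_
  filter_upwards [Ioo_mem_nhdsGT one_pos] with t ht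
  rw [div_eq_mul_inv, ← ENNReal.ofReal_inv_of_pos (Real.rpow_pos_of_pos ht.1 _),
    ← Real.rpow_neg ht.1.le, neg_sub]
  exact mul_le_mul_left (measure_mono (thickening_mono ht.2.le A)) _

lemma eventually_volume_thickening_le (hb : Bornology.IsBounded A) {σ : ℝ}
    (hσ : upperBoxDim N A < σ) :
    ∀ᶠ t in 𝓝[>] 0, volume (thickening t A) ≤ ENNReal.ofReal (t ^ ((N : ℝ) - σ)) := by
  obtain ⟨r, ⟨-, hr⟩, hrσ⟩ := exists_lt_of_csInf_lt (s := {r | 0 < r ∧ upperMink N A r = 0})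
    ⟨(N : ℝ) + 1, by positivity, upperMink_eq_zero_of_lt hb (by linarith)⟩ hσ
  have hlt : ∀ᶠ t in 𝓝[>] 0,
      volume (thickening t A) / ENNReal.ofReal (t ^ ((N : ℝ) - r)) < 1 :=
    eventually_lt_of_limsup_lt (by rw [← upperMink, hr]; exact one_pos)
  filter_upwards [hlt, Ioo_mem_nhdsGT one_pos] with t ht ht1
  rw [ENNReal.div_lt_iff (Or.inl (ENNReal.ofReal_pos.2 (Real.rpow_pos_of_pos ht1.1 _)).ne')
    (Or.inl ENNReal.ofReal_ne_top), one_mul] at ht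
  exact ht.le.trans (ENNReal.ofReal_le_ofReal
    (Real.rpow_le_rpow_of_exponent_ge ht1.1 ht1.2.le (by linarith)))

lemma eventually_measure_infDist_lt_le (hb : Bornology.IsBounded A) (δ : ℝ) {σ : ℝ}
    (hσ : upperBoxDim N A < σ) :
    ∀ᶠ t in 𝓝[>] 0, volume.restrict (thickening δ A) {x | infDist x A < t} ≤
      ENNReal.ofReal (t ^ ((N : ℝ) - σ)) := by
  filter_upwards [eventually_volume_thickening_le hb hσ] with t ht
  refine le_trans ?_ ht
  rw [Measure.restrict_apply' isOpen_thickening.measurableSet]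
  exact measure_mono fun x ⟨hxt, hxδ⟩ =>
    (mem_thickening_iff_infDist_lt (nonempty_of_mem_thickening hxδ)).2 hxt

lemma integrableOn_infDist_rpow (hb : Bornology.IsBounded A) (δ : ℝ) {p : ℝ}
    (hp : upperBoxDim N A - N < p) :
    IntegrableOn (fun x => infDist x A ^ p) (thickening δ A) := by
  have : IsFiniteMeasure (volume.restrict (thickening δ A)) :=
    isFiniteMeasure_restrict.2 hb.thickening.measure_lt_top.ne
  have hmeas : Measurable fun x => infDist x A := (continuous_infDist_pt A).measurable
  rcases lt_or_ge p 0 with hp0 | hp0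
  · obtain ⟨σ, hDσ, hσp⟩ := exists_between (show upperBoxDim N A < p + N by linarith)
    exact integrable_rpow_of_measure_lt_le_rpow hmeas.aemeasurable (fun _ => infDist_nonneg)
      (eventually_measure_infDist_lt_le hb δ hDσ) (by linarith) hp0
  · refine Integrable.of_bound (hmeas.pow_const p).aestronglyMeasurable (δ ^ p) ?_
    filter_upwards [ae_restrict_mem isOpen_thickening.measurableSet] with x hx
    rw [Real.norm_of_nonneg (Real.rpow_nonneg infDist_nonneg p)]
    exact Real.rpow_le_rpow infDist_nonneg (infDist_lt_of_mem_thickening hx).le hp0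

end BoxDimension

theorem stmt0_general (N : ℕ) (A : Set (EuclideanSpace ℝ (Fin N)))
    (hb : Bornology.IsBounded A) (δ : ℝ) :
    (∀ s : ℂ, upperBoxDim N A < s.re →
      IntegrableOn (fun x => (Metric.infDist x A : ℂ) ^ (s - (N : ℂ)))
        (thickening δ A) volume) ∧
    DifferentiableOn ℂ
      (fun s : ℂ => ∫ x in thickening δ A, (Metric.infDist x A : ℂ) ^ (s - (N : ℂ)))
      {s : ℂ | upperBoxDim N A < s.re} := by
  have hmeas : AEMeasurable (fun x => infDist x A) (volume.restrict (thickening δ A)) :=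
    (continuous_infDist_pt A).measurable.aemeasurable
  have hshift : ∀ s : ℂ, (s - (N : ℂ)).re = s.re - N := fun s => by simp
  refine ⟨fun s hs => integrable_ofReal_cpow hmeas (fun _ => infDist_nonneg)
    (integrableOn_infDist_rpow hb δ (by rw [hshift]; linarith)), ?_⟩
  have hzero : 0 ≤ upperBoxDim N A - N ∨
      ∀ᵐ x ∂volume.restrict (thickening δ A), 0 < infDist x A := by
    rcases le_or_gt (N : ℝ) (upperBoxDim N A) with hN | hN
    · exact Or.inl (by linarith)
    · obtain ⟨σ, hDσ, hσN⟩ := exists_between hN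
      exact Or.inr (ae_pos_of_measure_lt_le_rpow (by linarith)
        (eventually_measure_infDist_lt_le hb δ hDσ))
  refine (differentiableOn_integral_ofReal_cpow hmeas (fun _ => infDist_nonneg)
    (fun p hp => integrableOn_infDist_rpow hb δ hp) hzero).comp (by fun_prop)
    fun s (hs : upperBoxDim N A < s.re) => show upperBoxDim N A - N < (s - (N : ℂ)).re by
      rw [hshift]; linarith

/-- the distance zeta function `ζ_A(s) = ∫_{A_δ} d(x,A)^{s-N} dx` is well defined
(absolutely convergent) and holomorphic on the half-plane `{Re s > dim̄_B A}`. -/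
theorem stmt0 (N : ℕ) (hN : 1 ≤ N) (A : Set (EuclideanSpace ℝ (Fin N)))
    (hA : A.Nonempty) (hb : Bornology.IsBounded A) (δ : ℝ) (hδ : 0 < δ) :
    (∀ s : ℂ, upperBoxDim N A < s.re →
      IntegrableOn (fun x => (Metric.infDist x A : ℂ) ^ (s - (N : ℂ)))
        (thickening δ A) volume) ∧
    DifferentiableOn ℂ
      (fun s : ℂ => ∫ x in thickening δ A, (Metric.infDist x A : ℂ) ^ (s - (N : ℂ)))
      {s : ℂ | upperBoxDim N A < s.re} :=
  stmt0_general N A hb δ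
end

section
/- Let N ≥ 1, let A be a nonempty bounded subset of ℝ^N, let δ > 0 and let λ > 0. Then dim̄_B(λA) = dim̄_B A, and for every s ∈ ℂ with Re s > dim̄_B A the distance zeta function satisfies the scaling identity ∫_{(λA)_{λδ}} d(x, λA)^{s−N} dx = λ^s ∫_{A_δ} d(x,A)^{s−N} dx, where λA = {λa : a ∈ A} (note that λ(A_δ) = (λA)_{λδ}). -/
/-! Multiplication by `c > 0` is a similarity of `ℝ^N`: it maps `A_t` onto `(c • A)_{c t}`,
multiplies distances to the set by `c` and Lebesgue measure by `c ^ N`. Hence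
`|(c • A)_{c t}| / (c t)^{N - r} = c ^ r |A_t| / t^{N - r}`, so the upper Minkowski contents of
`c • A` and `A` differ by the factor `c ^ r ∈ (0, ∞)` and vanish for the same `r`; and the
substitution `x = c • y` in the zeta integral produces the factor
`c ^ N * c ^ (s - N) = c ^ s`. -/

open MeasureTheory Metric Filter Set
open scoped ENNReal Topology Pointwise

theorem thickening_smul₀ {𝕜 E : Type*} [NormedField 𝕜] [SeminormedAddCommGroup E]
    [NormedSpace 𝕜 E] {c : 𝕜} (hc : c ≠ 0) (δ : ℝ) (s : Set E) :
    thickening (‖c‖ * δ) (c • s) = c • thickening δ s := by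
  simp_rw [thickening_eq_biUnion_ball, Set.smul_set_iUnion₂, _root_.smul_ball hc,
    ← Set.image_smul, Set.biUnion_image]

theorem map_mul_left_nhdsGT_zero {𝕜 : Type*} [Field 𝕜] [LinearOrder 𝕜] [IsStrictOrderedRing 𝕜]
    [TopologicalSpace 𝕜] [OrderTopology 𝕜] {c : 𝕜} (hc : 0 < c) :
    map (c * ·) (𝓝[>] 0) = 𝓝[>] 0 := by
  conv_lhs => rw [← comap_mulLeft_nhdsGT_zero hc]
  exact map_comap_of_surjective (mul_left_surjective₀ hc.ne') _

section HaarScaling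

open Module

variable {E : Type*} [NormedAddCommGroup E] [NormedSpace ℝ E] [FiniteDimensional ℝ E]
  [MeasurableSpace E] [BorelSpace E] (μ : Measure E) [μ.IsAddHaarMeasure] {c : ℝ}

theorem addHaar_thickening_smul (hc : 0 < c) (δ : ℝ) (s : Set E) :
    μ (thickening (c * δ) (c • s)) =
      ENNReal.ofReal (c ^ finrank ℝ E) * μ (thickening δ s) := by
  rw [← Measure.addHaar_smul_of_nonneg μ hc.le, ← thickening_smul₀ hc.ne',
    Real.norm_of_nonneg hc.le]

theorem setIntegral_thickening_smul_comp_infDist {F : Type*} [NormedAddCommGroup F]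
    [NormedSpace ℝ F] (hc : 0 < c) (δ : ℝ) (s : Set E) (g : ℝ → F) :
    ∫ x in thickening (c * δ) (c • s), g (infDist x (c • s)) ∂μ =
      c ^ finrank ℝ E • ∫ x in thickening δ s, g (c * infDist x s) ∂μ := by
  have hdist (x : E) : infDist (c • x) (c • s) = c * infDist x s := by
    rw [infDist_smul₀ hc.ne', Real.norm_of_nonneg hc.le]
  simp_rw [← hdist,
    Measure.setIntegral_comp_smul_of_pos μ (fun x ↦ g (infDist x (c • s))) _ hc,
    smul_inv_smul₀ (pow_ne_zero _ hc.ne'), ← thickening_smul₀ hc.ne', Real.norm_of_nonneg hc.le]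

end HaarScaling

theorem upperMink_smul (N : ℕ) (A : Set (EuclideanSpace ℝ (Fin N))) {c : ℝ} (hc : 0 < c)
    (r : ℝ) : upperMink N (c • A) r = ENNReal.ofReal (c ^ r) * upperMink N A r := by
  have hscale : ∀ᶠ t in 𝓝[>] (0 : ℝ),
      volume (thickening (c * t) (c • A)) / ENNReal.ofReal ((c * t) ^ ((N : ℝ) - r)) =
        ENNReal.ofReal (c ^ r) *
          (volume (thickening t A) / ENNReal.ofReal (t ^ ((N : ℝ) - r))) := by
    filter_upwards [self_mem_nhdsWithin] with t (ht : 0 < t)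
    have hpow : ENNReal.ofReal (c ^ N) =
        ENNReal.ofReal (c ^ ((N : ℝ) - r)) * ENNReal.ofReal (c ^ r) := by
      rw [← ENNReal.ofReal_mul (by positivity), ← Real.rpow_add hc, sub_add_cancel,
        Real.rpow_natCast]
    rw [addHaar_thickening_smul volume hc, finrank_euclideanSpace_fin, hpow,
      Real.mul_rpow hc.le ht.le, ENNReal.ofReal_mul (by positivity), mul_assoc,
      ENNReal.mul_div_mul_left _ _ (by positivity) ENNReal.ofReal_ne_top, mul_div_assoc]
  rw [upperMink, upperMink, ← ENNReal.limsup_const_mul_of_ne_top ENNReal.ofReal_ne_top,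
    ← limsup_congr hscale]
  conv_lhs => rw [← map_mul_left_nhdsGT_zero hc]
  rfl

theorem upperBoxDim_smul (N : ℕ) (A : Set (EuclideanSpace ℝ (Fin N))) {c : ℝ} (hc : 0 < c) :
    upperBoxDim N (c • A) = upperBoxDim N A := by
  have hpos (r : ℝ) : ¬c ^ r ≤ 0 := (Real.rpow_pos_of_pos hc r).not_ge
  simp [upperBoxDim, upperMink_smul N A hc, hpos]

theorem stmt3_general (N : ℕ) (A : Set (EuclideanSpace ℝ (Fin N))) (δ : ℝ) (c : ℝ) (hc : 0 < c) :
    upperBoxDim N (c • A) = upperBoxDim N A ∧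
    ∀ s : ℂ, upperBoxDim N A < s.re →
      ∫ x in thickening (c * δ) (c • A), (Metric.infDist x (c • A) : ℂ) ^ (s - (N : ℂ)) =
        (c : ℂ) ^ s * ∫ x in thickening δ A, (Metric.infDist x A : ℂ) ^ (s - (N : ℂ)) := by
  refine ⟨upperBoxDim_smul N A hc, fun s _ ↦ ?_⟩
  have hc' : (c : ℂ) ≠ 0 := Complex.ofReal_ne_zero.2 hc.ne'
  have hpow : (c : ℂ) ^ N * (c : ℂ) ^ (s - N) = (c : ℂ) ^ s := by
    rw [Complex.cpow_sub _ _ hc', Complex.cpow_natCast, mul_div_cancel₀ _ (pow_ne_zero _ hc')]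
  simp_rw [setIntegral_thickening_smul_comp_infDist volume hc δ A
      (fun d : ℝ ↦ (d : ℂ) ^ (s - (N : ℂ))), finrank_euclideanSpace_fin, Complex.ofReal_mul,
    Complex.mul_cpow_ofReal_nonneg hc.le infDist_nonneg, integral_const_mul, Complex.real_smul,
    ← mul_assoc, Complex.ofReal_pow, hpow]

/-- scaling property of the distance zeta function:
`dim̄_B (λA) = dim̄_B A` and for `Re s > dim̄_B A`,
`∫_{(λA)_{λδ}} d(x, λA)^{s−N} dx = λ^s ∫_{A_δ} d(x,A)^{s−N} dx`. -/
theorem stmt3 (N : ℕ) (hN : 1 ≤ N) (A : Set (EuclideanSpace ℝ (Fin N)))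
    (hA : A.Nonempty) (hb : Bornology.IsBounded A) (δ : ℝ) (hδ : 0 < δ)
    (c : ℝ) (hc : 0 < c) :
    upperBoxDim N (c • A) = upperBoxDim N A ∧
    ∀ s : ℂ, upperBoxDim N A < s.re →
      ∫ x in thickening (c * δ) (c • A), (Metric.infDist x (c • A) : ℂ) ^ (s - (N : ℂ)) =
        (c : ℂ) ^ s * ∫ x in thickening δ A, (Metric.infDist x A : ℂ) ^ (s - (N : ℂ)) :=
  stmt3_general N A δ c hc
end

section
/- Let N ≥ 1, let A be a nonempty bounded subset of ℝ^N with dim̄_B A < N, and let δ > 0. Then the abscissa of convergence of the tube zeta function equals the upper box dimension: inf{α ∈ ℝ : ∫_0^δ t^{α−N−1} |A_t| dt < ∞} = dim̄_B A. -/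
open MeasureTheory Metric Filter Set
open scoped ENNReal Topology

/-!
For `α > dim̄_B A` choose `dim̄_B A < r < α`; then `|A_t| ≤ t^{N-r}` for small `t`, so near `0`
the integrand is dominated by the integrable function `t^{α-r-1}`. For `α < dim̄_B A` the content
`M^{*α}(A)` is positive (when `α ≤ 0` because `A_t` contains a ball of radius `t`), so
`|A_{t₀}| ≥ c t₀^{N-α}` for arbitrarily small `t₀`. As `t ↦ |A_t|` is monotone and
`α - N - 1 ≤ 0` (because `dim̄_B A ≤ N`), the integral over `(t₀, 2t₀]` is then at least
`c 2^{α-N-1}`, which contradicts the absolute continuity of the integral at `0`.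
-/

lemma monotone_measure_thickening {X : Type*} [PseudoEMetricSpace X] [MeasurableSpace X]
    (μ : Measure X) (A : Set X) : Monotone fun t : ℝ => μ (thickening t A) :=
  fun _ _ h => measure_mono (thickening_mono h A)

lemma monotone_toReal_measure_thickening {X : Type*} [PseudoMetricSpace X] [ProperSpace X]
    [MeasurableSpace X] (μ : Measure X) [IsFiniteMeasureOnCompacts μ] {A : Set X}
    (hb : Bornology.IsBounded A) : Monotone fun t : ℝ => (μ (thickening t A)).toReal :=
  fun _ _ h => ENNReal.toReal_mono hb.thickening.measure_lt_top.ne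
    (monotone_measure_thickening μ A h)

lemma integrableOn_Ioc_zero_rpow_mul_of_le {g : ℝ → ℝ} (hg : Measurable g) {a b ε : ℝ}
    (hab : -1 < a + b) (hg_nonneg : ∀ t ∈ Ioc 0 ε, 0 ≤ g t)
    (hg_le : ∀ t ∈ Ioc 0 ε, g t ≤ t ^ b) :
    IntegrableOn (fun t => t ^ a * g t) (Ioc 0 ε) := by
  refine (intervalIntegral.intervalIntegrable_rpow' hab (a := 0) (b := ε)).1.mono'
    ((measurable_id.pow_const a).mul hg).aestronglyMeasurable ?_
  filter_upwards [ae_restrict_mem measurableSet_Ioc] with t ht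
  have ht0 : 0 < t := ht.1
  rw [Real.norm_of_nonneg (mul_nonneg (by positivity) (hg_nonneg t ht)), Real.rpow_add ht0]
  exact mul_le_mul_of_nonneg_left (hg_le t ht) (by positivity)

lemma integrableOn_Ioc_rpow_mul_of_monotone {g : ℝ → ℝ} (hg : Monotone g) (a : ℝ) {m : ℝ}
    (hm : 0 < m) (δ : ℝ) : IntegrableOn (fun t => t ^ a * g t) (Ioc m δ) := by
  have hpow : ContinuousOn (fun t : ℝ => t ^ a) (Icc m δ) :=
    continuousOn_id.rpow_const fun t ht => Or.inl (hm.trans_le ht.1).ne'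
  exact (((hg.monotoneOn _).integrableOn_isCompact isCompact_Icc).continuousOn_mul hpow
    isCompact_Icc).mono_set Ioc_subset_Icc_self

lemma ofReal_le_setLIntegral_Ioc_rpow_mul {g : ℝ → ℝ} (hg : Monotone g) {a t₀ : ℝ} (ha : a ≤ 0)
    (ht₀ : 0 < t₀) (hg₀ : 0 ≤ g t₀) :
    ENNReal.ofReal ((2 * t₀) ^ a * g t₀ * t₀) ≤ ∫⁻ t in Ioc t₀ (2 * t₀), ‖t ^ a * g t‖ₑ := by
  calc ENNReal.ofReal ((2 * t₀) ^ a * g t₀ * t₀)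
      = ∫⁻ _ in Ioc t₀ (2 * t₀), ENNReal.ofReal ((2 * t₀) ^ a * g t₀) := by
        rw [setLIntegral_const, Real.volume_Ioc, ← ENNReal.ofReal_mul (by positivity)]
        ring_nf
    _ ≤ ∫⁻ t in Ioc t₀ (2 * t₀), ‖t ^ a * g t‖ₑ := by
        refine setLIntegral_mono' measurableSet_Ioc fun t ht => ?_
        have ht0 : 0 < t := ht₀.trans ht.1
        refine (ENNReal.ofReal_le_ofReal ?_).trans (Real.ofReal_le_enorm _)
        exact mul_le_mul (Real.rpow_le_rpow_of_nonpos ht0 ht.2 ha) (hg ht.1.le) hg₀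
          (by positivity)

lemma tendsto_setLIntegral_Ioc_zero {f : ℝ → ℝ≥0∞} {δ : ℝ} (hδ : 0 < δ)
    (hf : ∫⁻ t in Ioc 0 δ, f t ≠ ∞) :
    Tendsto (fun s => ∫⁻ t in Ioc 0 s, f t) (𝓝[>] 0) (𝓝 0) := by
  have hvol : Tendsto (fun s => volume.restrict (Ioc 0 δ) (Ioc 0 s)) (𝓝[>] 0) (𝓝 0) := by
    refine tendsto_of_tendsto_of_tendsto_of_le_of_le tendsto_const_nhds ?_ (fun _ => zero_le)
      fun s => Measure.restrict_apply_le _ _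
    simpa [Real.volume_Ioc] using
      ENNReal.tendsto_ofReal (tendsto_nhdsWithin_of_tendsto_nhds (a := (0 : ℝ)) tendsto_id)
  refine (tendsto_setLIntegral_zero hf hvol).congr' ?_
  filter_upwards [Ioo_mem_nhdsGT hδ] with s hs
  rw [Measure.restrict_restrict measurableSet_Ioc,
    Ioc_inter_Ioc, max_self, min_eq_left hs.2.le]

section Minkowski

variable {N : ℕ} {A : Set (EuclideanSpace ℝ (Fin N))}

lemma upperMink_antitone : Antitone (upperMink N A) := by
  intro r r' hrr'
  refine limsup_le_limsup ?_ isCobounded_le_of_bot isBounded_le_of_top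
  filter_upwards [Ioo_mem_nhdsGT zero_lt_one] with t ht
  exact ENNReal.div_le_div_left
    (ENNReal.ofReal_le_ofReal (Real.rpow_le_rpow_of_exponent_ge ht.1 ht.2.le (by linarith))) _

lemma upperMink_zero_pos (hA : A.Nonempty) : 0 < upperMink N A 0 := by
  obtain ⟨x, hx⟩ := hA
  refine (measure_ball_pos volume (0 : EuclideanSpace ℝ (Fin N)) zero_lt_one).trans_le
    (le_limsup_of_frequently_le (Eventually.frequently ?_) isBounded_le_of_top)
  filter_upwards [self_mem_nhdsWithin] with t (ht : 0 < t)
  rw [sub_zero, Real.rpow_natCast, ENNReal.le_div_iff_mul_le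
    (Or.inl (ENNReal.ofReal_pos.mpr (by positivity)).ne') (Or.inl ENNReal.ofReal_ne_top),
    mul_comm]
  calc ENNReal.ofReal (t ^ N) * volume (ball (0 : EuclideanSpace ℝ (Fin N)) 1)
      = volume (ball x t) := by
        rw [Measure.addHaar_ball_of_pos volume x ht, finrank_euclideanSpace_fin]
    _ ≤ volume (thickening t A) := measure_mono (ball_subset_thickening hx t)

lemma bddBelow_upperMink_eq_zero : BddBelow {r : ℝ | 0 < r ∧ upperMink N A r = 0} :=
  ⟨0, fun _ hr => hr.1.le⟩

lemma upperBoxDim_le (hb : Bornology.IsBounded A) : upperBoxDim N A ≤ N :=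
  le_of_forall_gt_imp_ge_of_dense fun _ hr => csInf_le bddBelow_upperMink_eq_zero
    ⟨N.cast_nonneg.trans_lt hr, upperMink_eq_zero_of_lt hb hr⟩

lemma upperMink_eq_zero_of_upperBoxDim_lt (hb : Bornology.IsBounded A) {r : ℝ}
    (hr : upperBoxDim N A < r) : upperMink N A r = 0 := by
  have hne : {r : ℝ | 0 < r ∧ upperMink N A r = 0}.Nonempty :=
    ⟨N + 1, by positivity, upperMink_eq_zero_of_lt hb (lt_add_one _)⟩
  obtain ⟨r', hr', hr'r⟩ := exists_lt_of_csInf_lt hne hr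
  exact le_antisymm ((upperMink_antitone hr'r.le).trans_eq hr'.2) zero_le

lemma upperMink_pos_of_lt_upperBoxDim (hA : A.Nonempty) {r : ℝ} (hr : r < upperBoxDim N A) :
    0 < upperMink N A r := by
  rcases le_or_gt r 0 with hr0 | hr0
  · exact (upperMink_zero_pos hA).trans_le (upperMink_antitone hr0)
  · exact pos_iff_ne_zero.mpr fun h =>
      (csInf_le bddBelow_upperMink_eq_zero ⟨hr0, h⟩).not_gt hr

lemma eventually_volume_thickening_le_of_upperMink_eq_zero {r : ℝ} (h : upperMink N A r = 0) :
    ∀ᶠ t in 𝓝[>] 0, (volume (thickening t A)).toReal ≤ t ^ ((N : ℝ) - r) := by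
  have h1 : upperMink N A r < 1 := h ▸ zero_lt_one
  filter_upwards [eventually_lt_of_limsup_lt h1, self_mem_nhdsWithin] with t ht (ht0 : 0 < t)
  rw [ENNReal.div_lt_iff (Or.inl (ENNReal.ofReal_pos.mpr (by positivity)).ne')
    (Or.inl ENNReal.ofReal_ne_top), one_mul] at ht
  exact ENNReal.toReal_le_of_le_ofReal (by positivity) ht.le

lemma exists_pos_frequently_mul_rpow_lt_volume_thickening (hb : Bornology.IsBounded A)
    {r : ℝ} (h : 0 < upperMink N A r) :
    ∃ c > 0, ∃ᶠ t in 𝓝[>] 0, c * t ^ ((N : ℝ) - r) < (volume (thickening t A)).toReal := by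
  obtain ⟨c, -, hc0, hcL⟩ := ENNReal.lt_iff_exists_real_btwn.mp h
  have hc : 0 < c := ENNReal.ofReal_pos.mp hc0
  refine ⟨c, hc, ?_⟩
  refine (frequently_lt_of_lt_limsup isCobounded_le_of_bot hcL).mp
    (eventually_mem_nhdsWithin.mono fun t (ht0 : 0 < t) ht => ?_)
  rw [ENNReal.lt_div_iff_mul_lt (Or.inl (ENNReal.ofReal_pos.mpr (by positivity)).ne')
    (Or.inl ENNReal.ofReal_ne_top), ← ENNReal.ofReal_mul hc.le] at ht
  exact (ENNReal.ofReal_lt_iff_lt_toReal (by positivity) hb.thickening.measure_lt_top.ne).mp ht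

end Minkowski

section TubeZeta

variable {N : ℕ} {A : Set (EuclideanSpace ℝ (Fin N))}

lemma integrableOn_of_upperBoxDim_lt (hb : Bornology.IsBounded A) {α : ℝ}
    (hα : upperBoxDim N A < α) (δ : ℝ) :
    IntegrableOn (fun t : ℝ => t ^ (α - N - 1) * (volume (thickening t A)).toReal)
      (Ioc 0 δ) := by
  obtain ⟨r, hDr, hrα⟩ := exists_between hα
  obtain ⟨ε, hε, hle⟩ := mem_nhdsGT_iff_exists_Ioc_subset.mp
    (eventually_volume_thickening_le_of_upperMink_eq_zero
      (upperMink_eq_zero_of_upperBoxDim_lt hb hDr))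
  have hmono := monotone_toReal_measure_thickening volume hb
  have hnear := integrableOn_Ioc_zero_rpow_mul_of_le hmono.measurable (a := α - N - 1)
    (b := N - r) (by linarith) (fun _ _ => ENNReal.toReal_nonneg) fun _ ht => hle ht
  exact (hnear.union (integrableOn_Ioc_rpow_mul_of_monotone hmono _ hε δ)).mono_set
    Ioc_subset_Ioc_union_Ioc

lemma not_integrableOn_of_lt_upperBoxDim (hA : A.Nonempty) (hb : Bornology.IsBounded A)
    {α δ : ℝ} (hδ : 0 < δ) (hα : α < upperBoxDim N A) :
    ¬ IntegrableOn (fun t : ℝ => t ^ (α - N - 1) * (volume (thickening t A)).toReal)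
      (Ioc 0 δ) := by
  intro hint
  set a := α - N - 1
  have ha : a ≤ 0 := by linarith [upperBoxDim_le hb]
  obtain ⟨c, hc, hfreq⟩ := exists_pos_frequently_mul_rpow_lt_volume_thickening hb
    (upperMink_pos_of_lt_upperBoxDim hA hα)
  obtain ⟨s, hs_lt, hs⟩ := (((tendsto_order.1 (tendsto_setLIntegral_Ioc_zero hδ hint.2.ne)).2
    (ENNReal.ofReal (c * 2 ^ a)) (by positivity)).and self_mem_nhdsWithin).exists
  obtain ⟨t₀, hct₀, ht₀⟩ := (hfreq.and_eventually (Ioo_mem_nhdsGT (half_pos hs))).exists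
  have ht₀_pos : 0 < t₀ := ht₀.1
  have hcalc : (2 * t₀) ^ a * (c * t₀ ^ ((N : ℝ) - α)) * t₀ = c * 2 ^ a := by
    have h1 : t₀ ^ a * t₀ ^ ((N : ℝ) - α) * t₀ = 1 := by
      rw [← Real.rpow_add ht₀_pos, ← Real.rpow_add_one ht₀_pos.ne',
        show a + (N - α) + 1 = 0 by ring, Real.rpow_zero]
    rw [Real.mul_rpow zero_le_two ht₀_pos.le]
    linear_combination (c * 2 ^ a) * h1
  refine hs_lt.not_ge ?_
  calc ENNReal.ofReal (c * 2 ^ a)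
      ≤ ENNReal.ofReal ((2 * t₀) ^ a * (volume (thickening t₀ A)).toReal * t₀) := by
        rw [← hcalc]
        gcongr
    _ ≤ ∫⁻ t in Ioc t₀ (2 * t₀), ‖t ^ a * (volume (thickening t A)).toReal‖ₑ :=
        ofReal_le_setLIntegral_Ioc_rpow_mul (monotone_toReal_measure_thickening volume hb) ha
          ht₀_pos ENNReal.toReal_nonneg
    _ ≤ ∫⁻ t in Ioc 0 s, ‖t ^ a * (volume (thickening t A)).toReal‖ₑ :=
        lintegral_mono_set (Ioc_subset_Ioc ht₀_pos.le (by linarith [ht₀.2]))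

end TubeZeta

theorem stmt6_general (N : ℕ) (A : Set (EuclideanSpace ℝ (Fin N)))
    (hA : A.Nonempty) (hb : Bornology.IsBounded A)
    (δ : ℝ) (hδ : 0 < δ) :
    sInf {α : ℝ |
        IntegrableOn
          (fun t : ℝ => t ^ (α - (N : ℝ) - 1) * (volume (thickening t A)).toReal)
          (Ioc 0 δ) volume}
      = upperBoxDim N A := by
  refine csInf_eq_of_forall_ge_of_forall_gt_exists_lt
    ⟨_, integrableOn_of_upperBoxDim_lt hb (lt_add_one _) δ⟩ (fun α hα => ?_) fun w hw => ?_
  · by_contra! hlt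
    exact not_integrableOn_of_lt_upperBoxDim hA hb hδ hlt hα
  · obtain ⟨α, hDα, hαw⟩ := exists_between hw
    exact ⟨α, integrableOn_of_upperBoxDim_lt hb hDα δ, hαw⟩

/-- if `dim̄_B A < N` then the abscissa of convergence of the tube zeta function
equals the upper box dimension: `inf {α ∈ ℝ : ∫_0^δ t^{α−N−1}|A_t| dt < ∞} = dim̄_B A`. -/
theorem stmt6 (N : ℕ) (hN : 1 ≤ N) (A : Set (EuclideanSpace ℝ (Fin N)))
    (hA : A.Nonempty) (hb : Bornology.IsBounded A) (hdim : upperBoxDim N A < N)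
    (δ : ℝ) (hδ : 0 < δ) :
    sInf {α : ℝ |
        IntegrableOn
          (fun t : ℝ => t ^ (α - (N : ℝ) - 1) * (volume (thickening t A)).toReal)
          (Ioc 0 δ) volume}
      = upperBoxDim N A :=
  stmt6_general N A hA hb δ hδ
end

section
/- Let a > 0, let Ω = (0,a)² ⊂ ℝ² be the open square of side a and let A = ∂Ω be its boundary. Then for every s ∈ ℂ with Re s > 1, the integral ∫_Ω d(x, A)^{s−2} dx converges absolutely and equals 2^{3−s} a^s / (s(s−1)), where d(x,A) is the Euclidean distance from x to A. -/
open MeasureTheory Metric Filter Set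
open scoped ENNReal Topology Real

/-!
On the open square the distance to the boundary is `min (g x₀) (g x₁)`, where
`g u = min u (a - u)` is the tent function. The reflection `u ↦ a - u` folds `(0, a)` twice onto
`(0, a/2)`, so by Fubini the integral equals `4 ∫₀^{a/2} ∫₀^{a/2} min(x, y)^{s-2} dy dx`, an
elementary integral with value `2 (a/2)^s / (s (s - 1))`. Absolute convergence follows from
`min(u, v)^r ≤ u^r + v^r` and the integrability of `u^r` near `0` for `r > -1`.
-/

open intervalIntegral

theorem infDist_frontier_eq_infDist_compl {E : Type*} [NormedAddCommGroup E] [NormedSpace ℝ E]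
    [FiniteDimensional ℝ E] {x : E} {s : Set E} (hx : x ∈ s) :
    infDist x (frontier s) = infDist x sᶜ := by
  rcases eq_or_ne s univ with rfl | hs
  · simp
  obtain ⟨y, hy, hxy⟩ := exists_mem_frontier_infDist_compl_eq_dist hx hs
  refine le_antisymm (hxy ▸ infDist_le_dist_of_mem hy) ?_
  rw [← infDist_closure (s := sᶜ)]
  exact infDist_le_infDist_of_subset (frontier_compl s ▸ frontier_subset_closure) ⟨y, hy⟩

section Box

variable {ι : Type*} [Fintype ι] {a : ℝ} {x : EuclideanSpace ℝ ι}

theorem infDist_compl_box_le (hx : ∀ i, x i ∈ Ioo 0 a) (i : ι) :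
    infDist x {y : EuclideanSpace ℝ ι | ∀ i, y i ∈ Ioo 0 a}ᶜ ≤ min (x i) (a - x i) := by
  classical
  have hle : ∀ t ∉ Ioo 0 a,
      infDist x {y : EuclideanSpace ℝ ι | ∀ i, y i ∈ Ioo 0 a}ᶜ ≤ |x i - t| := by
    intro t ht
    have hmem : x + EuclideanSpace.single i (t - x i) ∉
        {y : EuclideanSpace ℝ ι | ∀ i, y i ∈ Ioo 0 a} :=
      fun h => ht (by simpa using h i)
    calc _ ≤ dist x (x + EuclideanSpace.single i (t - x i)) := infDist_le_dist_of_mem hmem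
      _ = |x i - t| := by simp [abs_sub_comm]
  have h0 := hle 0 (by simp)
  have ha := hle a (by simp)
  rw [sub_zero, abs_of_pos (hx i).1] at h0
  rw [abs_sub_comm, abs_of_pos (sub_pos.2 (hx i).2)] at ha
  exact le_min h0 ha

theorem le_infDist_compl_box [Nonempty ι] {m : ℝ} (hm : ∀ i, m ≤ x i ∧ m ≤ a - x i) :
    m ≤ infDist x {y : EuclideanSpace ℝ ι | ∀ i, y i ∈ Ioo 0 a}ᶜ := by
  refine (le_infDist ⟨0, fun h => (h (Classical.arbitrary ι)).1.false⟩).2 fun y hy => ?_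
  obtain ⟨i, hi⟩ : ∃ i, y i ∉ Ioo 0 a := by simpa using hy
  refine le_trans ?_ (PiLp.dist_apply_le x y i)
  rw [Real.dist_eq]
  rcases le_or_gt (y i) 0 with h | h
  · linarith [(hm i).1, le_abs_self (x i - y i)]
  · have : a ≤ y i := not_lt.1 fun h' => hi ⟨h, h'⟩
    linarith [(hm i).2, neg_abs_le (x i - y i)]

end Box

theorem infDist_frontier_square {a : ℝ} {x : EuclideanSpace ℝ (Fin 2)}
    (hx : ∀ i, x i ∈ Ioo 0 a) :
    infDist x (frontier {y : EuclideanSpace ℝ (Fin 2) | ∀ i, y i ∈ Ioo 0 a}) =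
      min (min (x 0) (a - x 0)) (min (x 1) (a - x 1)) := by
  rw [infDist_frontier_eq_infDist_compl (s := {y : EuclideanSpace ℝ (Fin 2) | ∀ i, y i ∈ Ioo 0 a})
    hx]
  refine le_antisymm (le_min (infDist_compl_box_le hx 0) (infDist_compl_box_le hx 1))
    (le_infDist_compl_box fun i => ?_)
  fin_cases i <;> simp

section Tent

variable {E : Type*} [NormedAddCommGroup E] {φ : ℝ → E} {a : ℝ}

theorem IntervalIntegrable.comp_min_sub (ha : 0 ≤ a)
    (hφ : IntervalIntegrable φ volume 0 (a / 2)) :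
    IntervalIntegrable (fun t => φ (min t (a - t))) volume 0 a := by
  have hleft : IntervalIntegrable (fun t => φ (min t (a - t))) volume 0 (a / 2) := by
    refine (intervalIntegrable_congr fun t ht => ?_).2 hφ
    rw [uIoc_of_le (by linarith)] at ht
    simp only [min_eq_left (by linarith [ht.2] : t ≤ a - t)]
  have hright : IntervalIntegrable (fun t => φ (min t (a - t))) volume (a / 2) a := by
    have h := hφ.comp_sub_left a
    rw [sub_zero, sub_half] at h
    refine (intervalIntegrable_congr fun t ht => ?_).2 h.symm
    rw [uIoc_of_le (by linarith)] at ht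
    simp only [min_eq_right (by linarith [ht.1] : a - t ≤ t)]
  exact hleft.trans hright

theorem integral_comp_min_sub [NormedSpace ℝ E] (ha : 0 ≤ a)
    (hφ : IntervalIntegrable φ volume 0 (a / 2)) :
    ∫ t in 0..a, φ (min t (a - t)) = 2 • ∫ t in 0..a / 2, φ t := by
  have h := hφ.comp_min_sub ha
  have hhalf : a / 2 ∈ uIcc 0 a := by rw [uIcc_of_le ha]; constructor <;> linarith
  rw [← integral_add_adjacent_intervals (h.mono_set (uIcc_subset_uIcc_left hhalf))
    (h.mono_set (uIcc_subset_uIcc_right hhalf))]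
  have hleft : ∫ t in 0..a / 2, φ (min t (a - t)) = ∫ t in 0..a / 2, φ t := by
    refine integral_congr fun t ht => ?_
    rw [uIcc_of_le (by linarith)] at ht
    simp only [min_eq_left (by linarith [ht.2] : t ≤ a - t)]
  have hright : ∫ t in a / 2..a, φ (min t (a - t)) = ∫ t in 0..a / 2, φ t := by
    rw [integral_congr (g := fun t => φ (a - t)) fun t ht => ?_, integral_comp_sub_left,
      sub_self, sub_half]
    rw [uIcc_of_le (by linarith)] at ht
    simp only [min_eq_right (by linarith [ht.1] : a - t ≤ t)]
  rw [hleft, hright, two_nsmul]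

end Tent

section MinCpow

variable {r : ℂ} {b c : ℝ}

theorem Complex.add_one_ne_zero_of_neg_one_lt_re (hr : -1 < r.re) : r + 1 ≠ 0 := by
  intro h
  have := congrArg Complex.re h
  simp only [Complex.add_re, Complex.one_re, Complex.zero_re] at this
  linarith

theorem Complex.cpow_add_one_eq_mul (hr : r + 1 ≠ 0) (x : ℂ) : x ^ (r + 1) = x * x ^ r := by
  rcases eq_or_ne x 0 with rfl | hx
  · simp [Complex.zero_cpow hr]
  · rw [Complex.cpow_add _ _ hx, Complex.cpow_one, mul_comm]

theorem integral_cpow_of_neg_one_lt_re (hr : -1 < r.re) (b : ℝ) :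
    ∫ x in 0..b, (x : ℂ) ^ r = (b : ℂ) ^ (r + 1) / (r + 1) := by
  rw [integral_cpow (Or.inl hr), Complex.ofReal_zero,
    Complex.zero_cpow (Complex.add_one_ne_zero_of_neg_one_lt_re hr), sub_zero]

theorem eqOn_min_cpow_left (hc : 0 ≤ c) :
    EqOn (fun y : ℝ => ((min c y : ℝ) : ℂ) ^ r) (fun y => (y : ℂ) ^ r) (uIcc 0 c) := by
  intro y hy
  rw [uIcc_of_le hc] at hy
  simp only [min_eq_right hy.2]

theorem eqOn_min_cpow_right (hcb : c ≤ b) :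
    EqOn (fun y : ℝ => ((min c y : ℝ) : ℂ) ^ r) (fun _ => (c : ℂ) ^ r) (uIcc c b) := by
  intro y hy
  rw [uIcc_of_le hcb] at hy
  simp only [min_eq_left hy.1]

theorem intervalIntegrable_min_cpow (hr : -1 < r.re) (hc : 0 ≤ c) (hcb : c ≤ b) :
    IntervalIntegrable (fun y : ℝ => ((min c y : ℝ) : ℂ) ^ r) volume 0 b :=
  ((intervalIntegrable_cpow' hr).congr ((eqOn_min_cpow_left hc).symm.mono uIoc_subset_uIcc)).trans
    (intervalIntegrable_const.congr ((eqOn_min_cpow_right hcb).symm.mono uIoc_subset_uIcc))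

theorem integral_min_cpow (hr : -1 < r.re) (hc : 0 ≤ c) (hcb : c ≤ b) :
    ∫ y in 0..b, ((min c y : ℝ) : ℂ) ^ r =
      (c : ℂ) ^ (r + 1) / (r + 1) + (b - c) * (c : ℂ) ^ r := by
  rw [← integral_add_adjacent_intervals (b := c) (intervalIntegrable_min_cpow hr hc le_rfl)
      (intervalIntegrable_const.congr ((eqOn_min_cpow_right hcb).symm.mono uIoc_subset_uIcc)),
    integral_congr (eqOn_min_cpow_left hc), integral_congr (eqOn_min_cpow_right hcb),
    integral_cpow_of_neg_one_lt_re hr, intervalIntegral.integral_const, Complex.real_smul]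
  push_cast
  ring

theorem eqOn_integral_min_cpow (hr : -1 < r.re) (hb : 0 ≤ b) :
    EqOn (fun x : ℝ => ∫ y in 0..b, ((min x y : ℝ) : ℂ) ^ r)
      (fun x => (x : ℂ) ^ (r + 1) / (r + 1) + (b - x) * (x : ℂ) ^ r) (uIcc 0 b) := by
  intro x hx
  rw [uIcc_of_le hb] at hx
  exact integral_min_cpow hr hx.1 hx.2

theorem intervalIntegrable_integral_min_cpow (hr : -1 < r.re) (hb : 0 ≤ b) :
    IntervalIntegrable (fun x : ℝ => ∫ y in 0..b, ((min x y : ℝ) : ℂ) ^ r) volume 0 b := by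
  have hr1 : -1 < (r + 1).re := by simp only [Complex.add_re, Complex.one_re]; linarith
  exact (((intervalIntegrable_cpow' hr1).div_const _).add
    ((intervalIntegrable_cpow' hr).continuousOn_mul (by fun_prop))).congr
    ((eqOn_integral_min_cpow hr hb).symm.mono uIoc_subset_uIcc)

theorem integral_integral_min_cpow (hr : -1 < r.re) (hb : 0 ≤ b) :
    ∫ x in 0..b, ∫ y in 0..b, ((min x y : ℝ) : ℂ) ^ r =
      2 * (b : ℂ) ^ (r + 2) / ((r + 1) * (r + 2)) := by
  have hr1 : -1 < (r + 1).re := by simp only [Complex.add_re, Complex.one_re]; linarith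
  have hne1 := Complex.add_one_ne_zero_of_neg_one_lt_re hr
  have hne2 := Complex.add_one_ne_zero_of_neg_one_lt_re hr1
  have hsplit : ∀ x : ℝ, (x : ℂ) ^ (r + 1) / (r + 1) + (b - x) * (x : ℂ) ^ r =
      (x : ℂ) ^ (r + 1) / (r + 1) + (b * (x : ℂ) ^ r - (x : ℂ) ^ (r + 1)) := fun x => by
    rw [Complex.cpow_add_one_eq_mul hne1]; ring
  rw [integral_congr (eqOn_integral_min_cpow hr hb)]
  simp only [hsplit]
  have i0 := intervalIntegrable_cpow' hr (a := 0) (b := b)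
  have i1 := intervalIntegrable_cpow' hr1 (a := 0) (b := b)
  rw [integral_add (i1.div_const _) ((i0.const_mul _).sub i1), integral_sub (i0.const_mul _) i1,
    intervalIntegral.integral_div, intervalIntegral.integral_const_mul,
    integral_cpow_of_neg_one_lt_re hr, integral_cpow_of_neg_one_lt_re hr1,
    show r + 2 = r + 1 + 1 by ring, Complex.cpow_add_one_eq_mul hne2 (b : ℂ)]
  field_simp
  ring

end MinCpow

theorem norm_min_cpow_le {u v : ℝ} (hu : 0 < u) (hv : 0 < v) (z : ℂ) :
    ‖((min u v : ℝ) : ℂ) ^ z‖ ≤ u ^ z.re + v ^ z.re := by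
  rw [Complex.norm_cpow_eq_rpow_re_of_pos (lt_min hu hv)]
  rcases min_cases u v with ⟨h, _⟩ | ⟨h, _⟩ <;> rw [h]
  · linarith [Real.rpow_nonneg hv.le z.re]
  · linarith [Real.rpow_nonneg hu.le z.re]

theorem integrableOn_prod_min_cpow {α : Type*} [MeasurableSpace α] {μ : Measure α} [SFinite μ]
    {S : Set α} (hS : MeasurableSet S) (hμS : μ S ≠ ∞) {f : α → ℝ} (hf : Measurable f)
    (hpos : ∀ t ∈ S, 0 < f t) {z : ℂ} (hint : IntegrableOn (fun t => f t ^ z.re) S μ) :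
    IntegrableOn (fun p : α × α => ((min (f p.1) (f p.2) : ℝ) : ℂ) ^ z) (S ×ˢ S) (μ.prod μ) := by
  have : IsFiniteMeasure (μ.restrict S) := isFiniteMeasure_restrict.2 hμS
  refine Integrable.mono' (g := fun p => f p.1 ^ z.re + f p.2 ^ z.re) ?_
    (Measurable.aestronglyMeasurable (by fun_prop)) ?_
  · rw [← Measure.prod_restrict]
    exact (hint.comp_fst _).add (hint.comp_snd _)
  · filter_upwards [ae_restrict_mem (hS.prod hS)] with p hp
    exact norm_min_cpow_le (hpos _ hp.1) (hpos _ hp.2) z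

section Square

variable {a : ℝ} {z : ℂ}

theorem integrableOn_square_min_cpow (ha : 0 ≤ a) (hz : -1 < z.re) :
    IntegrableOn
      (fun p : ℝ × ℝ => ((min (min p.1 (a - p.1)) (min p.2 (a - p.2)) : ℝ) : ℂ) ^ z)
      (Ioo 0 a ×ˢ Ioo 0 a) := by
  rw [Measure.volume_eq_prod]
  refine integrableOn_prod_min_cpow measurableSet_Ioo measure_Ioo_lt_top.ne (by fun_prop)
    (fun t ht => lt_min ht.1 (sub_pos.2 ht.2)) ?_
  exact (intervalIntegrable_iff_integrableOn_Ioo_of_le ha).1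
    ((intervalIntegrable_rpow' hz).comp_min_sub ha)

theorem setIntegral_square_min_cpow (ha : 0 ≤ a) (hz : -1 < z.re) :
    ∫ p in Ioo 0 a ×ˢ Ioo 0 a, ((min (min p.1 (a - p.1)) (min p.2 (a - p.2)) : ℝ) : ℂ) ^ z =
      8 * ((a / 2 : ℝ) : ℂ) ^ (z + 2) / ((z + 1) * (z + 2)) := by
  have hIoo : ∀ f : ℝ → ℂ, ∫ t in Ioo 0 a, f t = ∫ t in 0..a, f t := fun f => by
    rw [intervalIntegral.integral_of_le ha, integral_Ioc_eq_integral_Ioo]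
  have hinner : EqOn
      (fun x => ∫ y in 0..a, ((min (min x (a - x)) (min y (a - y)) : ℝ) : ℂ) ^ z)
      (fun x => 2 * ∫ y in 0..a / 2, ((min (min x (a - x)) y : ℝ) : ℂ) ^ z) (uIcc 0 a) := by
    intro x hx
    rw [uIcc_of_le ha] at hx
    dsimp only
    have := min_le_left x (a - x)
    have := min_le_right x (a - x)
    rw [integral_comp_min_sub ha (intervalIntegrable_min_cpow hz
      (le_min hx.1 (sub_nonneg.2 hx.2)) (by linarith)), nsmul_eq_mul, Nat.cast_ofNat]
  rw [Measure.volume_eq_prod, setIntegral_prod _ (integrableOn_square_min_cpow ha hz)]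
  simp only [hIoo]
  rw [integral_congr hinner, intervalIntegral.integral_const_mul,
    integral_comp_min_sub ha (intervalIntegrable_integral_min_cpow hz (by linarith)),
    integral_integral_min_cpow hz (by linarith), nsmul_eq_mul, Nat.cast_ofNat]
  ring

end Square

namespace EuclideanSpace

def measurableEquivProd : EuclideanSpace ℝ (Fin 2) ≃ᵐ ℝ × ℝ :=
  (MeasurableEquiv.toLp 2 (Fin 2 → ℝ)).symm.trans MeasurableEquiv.finTwoArrow

theorem measurableEquivProd_apply (x : EuclideanSpace ℝ (Fin 2)) :
    measurableEquivProd x = (x 0, x 1) := rfl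

theorem volume_preserving_measurableEquivProd : MeasurePreserving measurableEquivProd :=
  (volume_preserving_finTwoArrow ℝ).comp (volume_preserving_symm_measurableEquiv_toLp (Fin 2))

theorem measurableEquivProd_preimage_prod_self (S : Set ℝ) :
    measurableEquivProd ⁻¹' (S ×ˢ S) = {y : EuclideanSpace ℝ (Fin 2) | ∀ i, y i ∈ S} := by
  ext y
  simp [measurableEquivProd_apply, Fin.forall_fin_two]

variable {E : Type*} [NormedAddCommGroup E]

theorem integrableOn_setOf_forall_iff {f : ℝ × ℝ → E} {S : Set ℝ} :
    IntegrableOn (fun x : EuclideanSpace ℝ (Fin 2) => f (x 0, x 1)) {y | ∀ i, y i ∈ S} ↔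
      IntegrableOn f (S ×ˢ S) := by
  rw [← measurableEquivProd_preimage_prod_self]
  exact volume_preserving_measurableEquivProd.integrableOn_comp_preimage
    measurableEquivProd.measurableEmbedding

theorem setIntegral_setOf_forall [NormedSpace ℝ E] (f : ℝ × ℝ → E) (S : Set ℝ) :
    ∫ x in {y : EuclideanSpace ℝ (Fin 2) | ∀ i, y i ∈ S}, f (x 0, x 1) = ∫ p in S ×ˢ S, f p := by
  rw [← measurableEquivProd_preimage_prod_self]
  exact volume_preserving_measurableEquivProd.setIntegral_preimage_emb
    measurableEquivProd.measurableEmbedding f _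

end EuclideanSpace

theorem eight_mul_half_cpow {a : ℝ} (ha : 0 ≤ a) (s : ℂ) :
    8 * ((a / 2 : ℝ) : ℂ) ^ s = (2 : ℂ) ^ ((3 : ℂ) - s) * (a : ℂ) ^ s := by
  rw [Complex.ofReal_div, Complex.div_cpow_ofReal_nonneg ha zero_le_two,
    Complex.cpow_sub _ _ two_ne_zero, Complex.cpow_ofNat, Complex.ofReal_ofNat]
  ring

/-- for the open square `Ω = (0,a)² ⊂ ℝ²` with boundary `A = ∂Ω`, and every
`s ∈ ℂ` with `Re s > 1`, the relative distance zeta integral `∫_Ω d(x,A)^{s−2} dx`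
converges absolutely and equals `2^{3−s} a^s / (s(s−1))`. -/
theorem stmt7 (a : ℝ) (ha : 0 < a) :
    ∀ s : ℂ, 1 < s.re →
      IntegrableOn
        (fun x : EuclideanSpace ℝ (Fin 2) =>
          (Metric.infDist x (frontier {y : EuclideanSpace ℝ (Fin 2) | ∀ i, y i ∈ Ioo 0 a}) : ℂ)
            ^ (s - 2))
        {y : EuclideanSpace ℝ (Fin 2) | ∀ i, y i ∈ Ioo 0 a} volume ∧
      ∫ x in {y : EuclideanSpace ℝ (Fin 2) | ∀ i, y i ∈ Ioo 0 a},
          (Metric.infDist x (frontier {y : EuclideanSpace ℝ (Fin 2) | ∀ i, y i ∈ Ioo 0 a}) : ℂ)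
            ^ (s - 2) =
        (2 : ℂ) ^ ((3 : ℂ) - s) * (a : ℂ) ^ s / (s * (s - 1)) := by
  intro s hs
  have hz : -1 < (s - 2).re := by simp only [Complex.sub_re, Complex.re_ofNat]; linarith
  have hΩ : MeasurableSet {y : EuclideanSpace ℝ (Fin 2) | ∀ i, y i ∈ Ioo 0 a} :=
    EuclideanSpace.measurableEquivProd_preimage_prod_self _ ▸
      (measurableSet_Ioo.prod measurableSet_Ioo).preimage
        EuclideanSpace.measurableEquivProd.measurable
  have hdist : EqOn
      (fun x => (infDist x (frontier {y : EuclideanSpace ℝ (Fin 2) | ∀ i, y i ∈ Ioo 0 a}) : ℂ)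
        ^ (s - 2))
      (fun x => ((min (min (x 0) (a - x 0)) (min (x 1) (a - x 1)) : ℝ) : ℂ) ^ (s - 2))
      {y : EuclideanSpace ℝ (Fin 2) | ∀ i, y i ∈ Ioo 0 a} := fun x hx => by
    simp only [infDist_frontier_square hx]
  refine ⟨IntegrableOn.congr_fun ?_ hdist.symm hΩ, ?_⟩
  · exact EuclideanSpace.integrableOn_setOf_forall_iff.2 (integrableOn_square_min_cpow ha.le hz)
  · rw [setIntegral_congr_fun hΩ hdist, EuclideanSpace.setIntegral_setOf_forall
      (fun p : ℝ × ℝ => ((min (min p.1 (a - p.1)) (min p.2 (a - p.2)) : ℝ) : ℂ) ^ (s - 2)),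
      setIntegral_square_min_cpow ha.le hz, sub_add_cancel, show s - 2 + 1 = s - 1 by ring,
      eight_mul_half_cpow ha.le, mul_comm (s - 1)]
end

section
/- Let N ≥ 1, let A be a nonempty bounded subset of ℝ^N, and let D ≥ 0, α > 0, M ∈ (0,∞). Assume there exist C > 0 and t₀ > 0 such that | |A_t| t^{D−N} − M | ≤ C t^α for all t ∈ (0, t₀) (i.e., |A_t| = t^{N−D}(M + O(t^α)) as t → 0⁺). Then the box dimension of A exists and equals D, A is Minkowski measurable with Minkowski content M^D(A) = M, and for every δ > 0 the tube zeta function ζ̃_A(s) = ∫_0^δ t^{s−N−1}|A_t| dt, whose abscissa of convergence is D, possesses a (necessarily unique) meromorphic continuation F to the open half-plane {Re s > D − α}. The only pole of F in this half-plane is s = D; it is simple, and lim_{s→D} (s−D)F(s) = M. -/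
open MeasureTheory Metric Filter Set
open scoped ENNReal Topology

/-- The lower `r`-dimensional Minkowski content of a subset of `ℝ^N`. -/
noncomputable def lowerMink (N : ℕ) (A : Set (EuclideanSpace ℝ (Fin N))) (r : ℝ) : ℝ≥0∞ :=
  Filter.liminf (fun t : ℝ => volume (thickening t A) / ENNReal.ofReal (t ^ ((N : ℝ) - r)))
    (𝓝[>] (0 : ℝ))

/-- The lower box (Minkowski) dimension of a subset of `ℝ^N`. -/
noncomputable def lowerBoxDim (N : ℕ) (A : Set (EuclideanSpace ℝ (Fin N))) : ℝ :=
  sInf {r : ℝ | 0 < r ∧ lowerMink N A r = 0}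

/-!
Write `g t = |A_t| t^{D-N}`, so that `g t → M`. Since `|A_t| / t^{N-r} = g t · t^{r-D}`, the
`r`-dimensional Minkowski contents equal `M` for `r = D`, vanish for `r > D` and are at least
`M > 0` for `r < D`; this gives the box dimension and the Minkowski measurability. Near `0` the
integrand `t^{β-N-1} |A_t|` of the tube zeta function is comparable to `t^{β-D-1}`, so it is
integrable exactly when `β > D`. For the continuation, `|A_t| t^{-N} = M t^{-D} + O(t^{α-D})`:
the remainder has a Mellin transform holomorphic on `Re s > D - α`, and the main term contributes
`M δ^{s-D} / (s - D)` to `∫_0^δ t^{s-1} |A_t| t^{-N} dt`.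
-/

lemma tendsto_nhdsGT_of_abs_sub_le_rpow {g : ℝ → ℝ} {M C α t₀ : ℝ} (hα : 0 < α) (ht₀ : 0 < t₀)
    (h : ∀ t ∈ Ioo 0 t₀, |g t - M| ≤ C * t ^ α) : Tendsto g (𝓝[>] 0) (𝓝 M) := by
  have hbound : Tendsto (fun t : ℝ => C * t ^ α) (𝓝[>] 0) (𝓝 0) := by
    have : Tendsto (fun t : ℝ => C * t ^ α) (𝓝[>] 0) (𝓝 (C * 0 ^ α)) :=
      ((Real.continuousAt_rpow_const 0 α (Or.inr hα.le)).tendsto.const_mul C).mono_left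
        nhdsWithin_le_nhds
    rwa [Real.zero_rpow hα.ne', mul_zero] at this
  refine tendsto_iff_dist_tendsto_zero.2 (squeeze_zero' (.of_forall fun _ => dist_nonneg) ?_ hbound)
  filter_upwards [Ioo_mem_nhdsGT ht₀] with t ht using h t ht

lemma isBigO_sub_mul_rpow_neg_of_abs_mul_rpow_sub_le {u : ℝ → ℝ} {M C D α t₀ : ℝ} (ht₀ : 0 < t₀)
    (h : ∀ t ∈ Ioo 0 t₀, |u t * t ^ D - M| ≤ C * t ^ α) :
    (fun t => u t - M * t ^ (-D)) =O[𝓝[>] 0] fun t => t ^ (-(D - α)) := by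
  refine Asymptotics.IsBigO.of_bound C ?_
  filter_upwards [Ioo_mem_nhdsGT ht₀] with t ht
  have ht0 : 0 < t := ht.1
  have hsplit : u t - M * t ^ (-D) = (u t * t ^ D - M) * t ^ (-D) := by
    rw [sub_mul, mul_assoc, ← Real.rpow_add ht0, add_neg_cancel, Real.rpow_zero, mul_one]
  rw [hsplit, norm_mul, Real.norm_eq_abs, Real.norm_of_nonneg (Real.rpow_nonneg ht0.le _),
    Real.norm_of_nonneg (Real.rpow_nonneg ht0.le _), show -(D - α) = α + -D by ring,
    Real.rpow_add ht0, ← mul_assoc]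
  exact mul_le_mul_of_nonneg_right (h t ht) (Real.rpow_nonneg ht0.le _)

lemma exists_forall_Ioc_rpow_mul_mem_Icc {V : ℝ → ℝ} {d D M δ : ℝ} (hM : 0 < M) (hδ : 0 < δ)
    (hlim : Tendsto (fun t => V t * t ^ (D - d)) (𝓝[>] 0) (𝓝 M)) (β : ℝ) :
    ∃ ε ∈ Ioc 0 δ, ∀ t ∈ Ioc 0 ε,
      t ^ (β - d - 1) * V t ∈ Icc (M / 2 * t ^ (β - D - 1)) (2 * M * t ^ (β - D - 1)) := by
  obtain ⟨ε₀, hε₀, hbounds⟩ := mem_nhdsGT_iff_exists_Ioc_subset.1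
    (hlim (Ioo_mem_nhds (half_lt_self hM) (lt_two_mul_self hM)))
  refine ⟨min ε₀ δ, ⟨lt_min hε₀ hδ, min_le_right _ _⟩, fun t ht => ?_⟩
  obtain ⟨hlow, hup⟩ := hbounds ⟨ht.1, ht.2.trans (min_le_left _ _)⟩
  have hfactor : t ^ (β - d - 1) * V t = V t * t ^ (D - d) * t ^ (β - D - 1) := by
    rw [mul_comm, mul_assoc, ← Real.rpow_add ht.1]
    ring_nf
  have htpow := Real.rpow_nonneg ht.1.le (β - D - 1)
  rw [hfactor]
  exact ⟨by gcongr, by gcongr⟩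

lemma integrableOn_Ioc_rpow_mul_iff {V : ℝ → ℝ} {d D M δ β : ℝ} (hV : Monotone V) (hM : 0 < M)
    (hδ : 0 < δ) (hlim : Tendsto (fun t => V t * t ^ (D - d)) (𝓝[>] 0) (𝓝 M)) :
    IntegrableOn (fun t => t ^ (β - d - 1) * V t) (Ioc 0 δ) ↔ D < β := by
  obtain ⟨ε, ⟨hε, hεδ⟩, hcomp⟩ := exists_forall_Ioc_rpow_mul_mem_Icc hM hδ hlim β
  have hpow_iff : IntegrableOn (fun t : ℝ => t ^ (β - D - 1)) (Ioc 0 ε) ↔ D < β := by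
    rw [integrableOn_Ioc_iff_integrableOn_Ioo (by simp),
      intervalIntegral.integrableOn_Ioo_rpow_iff hε]
    constructor <;> intro h <;> linarith
  constructor
  · intro hint
    refine hpow_iff.1 (((hint.mono_set (Ioc_subset_Ioc_right hεδ)).const_mul (2 / M)).mono'
      (by fun_prop) ((ae_restrict_iff' measurableSet_Ioc).2 (.of_forall fun t ht => ?_)))
    rw [Real.norm_of_nonneg (Real.rpow_nonneg ht.1.le _)]
    calc t ^ (β - D - 1) = 2 / M * (M / 2 * t ^ (β - D - 1)) := by field_simp
      _ ≤ 2 / M * (t ^ (β - d - 1) * V t) :=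
        mul_le_mul_of_nonneg_left (hcomp t ht).1 (by positivity)
  · intro hβ
    have hnear : IntegrableOn (fun t => t ^ (β - d - 1) * V t) (Ioc 0 ε) := by
      refine ((hpow_iff.2 hβ).const_mul (2 * M)).mono'
        ((by fun_prop : Measurable fun t : ℝ => t ^ (β - d - 1)).mul
          hV.measurable).aestronglyMeasurable.restrict
        ((ae_restrict_iff' measurableSet_Ioc).2 (.of_forall fun t ht => ?_))
      rw [Real.norm_of_nonneg ((mul_nonneg (by positivity) (Real.rpow_nonneg ht.1.le _)).trans
        (hcomp t ht).1)]
      exact (hcomp t ht).2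
    have hfar : IntegrableOn (fun t => t ^ (β - d - 1) * V t) (Ioc ε δ) :=
      (IntegrableOn.continuousOn_mul
        (continuousOn_id.rpow_const fun t ht => Or.inl (hε.trans_le ht.1).ne')
        ((hV.monotoneOn _).integrableOn_isCompact isCompact_Icc) isCompact_Icc).mono_set
        Ioc_subset_Icc_self
    simpa [Ioc_union_Ioc_eq_Ioc hε.le hεδ] using hnear.union hfar

lemma sInf_setOf_integrableOn_Ioc_rpow_mul {V : ℝ → ℝ} {d D M δ : ℝ} (hV : Monotone V)
    (hM : 0 < M) (hδ : 0 < δ) (hlim : Tendsto (fun t => V t * t ^ (D - d)) (𝓝[>] 0) (𝓝 M)) :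
    sInf {β : ℝ | IntegrableOn (fun t => t ^ (β - d - 1) * V t) (Ioc 0 δ)} = D := by
  have habscissa : {β : ℝ | IntegrableOn (fun t => t ^ (β - d - 1) * V t) (Ioc 0 δ)} = Ioi D :=
    Set.ext fun β => integrableOn_Ioc_rpow_mul_iff hV hM hδ hlim
  rw [habscissa, csInf_Ioi]

section Minkowski

variable {N : ℕ} {A : Set (EuclideanSpace ℝ (Fin N))}

lemma monotone_toReal_volume_thickening (hb : Bornology.IsBounded A) :
    Monotone fun t => (volume (thickening t A)).toReal := fun _ _ hst =>
  ENNReal.toReal_mono hb.thickening.measure_lt_top.ne (measure_mono (thickening_mono hst A))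

lemma volume_thickening_div_ofReal_rpow (hb : Bornology.IsBounded A) {t : ℝ} (ht : 0 < t) (r : ℝ) :
    volume (thickening t A) / ENNReal.ofReal (t ^ ((N : ℝ) - r)) =
      ENNReal.ofReal ((volume (thickening t A)).toReal * t ^ (r - N)) := by
  rw [← ENNReal.ofReal_toReal hb.thickening.measure_lt_top.ne,
    ← ENNReal.ofReal_div_of_pos (Real.rpow_pos_of_pos ht _), div_eq_mul_inv,
    ← Real.rpow_neg ht.le, neg_sub, ENNReal.toReal_ofReal ENNReal.toReal_nonneg]

-- `M * 0 ^ (r - D)` is `M` for `r = D` (as `0 ^ 0 = 1`) and `0` for `r > D`.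
lemma tendsto_volume_thickening_div_ofReal_rpow (hb : Bornology.IsBounded A) {D M r : ℝ}
    (hlim : Tendsto (fun t => (volume (thickening t A)).toReal * t ^ (D - N)) (𝓝[>] 0) (𝓝 M))
    (hr : D ≤ r) :
    Tendsto (fun t => volume (thickening t A) / ENNReal.ofReal (t ^ ((N : ℝ) - r))) (𝓝[>] 0)
      (𝓝 (ENNReal.ofReal (M * 0 ^ (r - D)))) := by
  have hpow : Tendsto (fun t : ℝ => t ^ (r - D)) (𝓝[>] 0) (𝓝 (0 ^ (r - D))) :=
    (Real.continuousAt_rpow_const 0 _ (Or.inr (sub_nonneg.2 hr))).tendsto.mono_left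
      nhdsWithin_le_nhds
  refine (ENNReal.tendsto_ofReal (hlim.mul hpow)).congr' ?_
  filter_upwards [self_mem_nhdsWithin] with t (ht : 0 < t)
  rw [volume_thickening_div_ofReal_rpow hb ht, mul_assoc, ← Real.rpow_add ht]
  ring_nf

lemma ofReal_le_lowerMink (hb : Bornology.IsBounded A) {D M r : ℝ}
    (hlim : Tendsto (fun t => (volume (thickening t A)).toReal * t ^ (D - N)) (𝓝[>] 0) (𝓝 M))
    (hr : r ≤ D) : ENNReal.ofReal M ≤ lowerMink N A r := by
  rw [← (ENNReal.tendsto_ofReal hlim).liminf_eq, lowerMink]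
  refine liminf_le_liminf ?_
  filter_upwards [Ioc_mem_nhdsGT zero_lt_one] with t ht
  have hgrow : 1 ≤ t ^ (r - D) :=
    Real.one_le_rpow_of_pos_of_le_one_of_nonpos ht.1 ht.2 (sub_nonpos.2 hr)
  have hnonneg : 0 ≤ (volume (thickening t A)).toReal * t ^ (D - N) :=
    mul_nonneg ENNReal.toReal_nonneg (Real.rpow_nonneg ht.1.le _)
  rw [volume_thickening_div_ofReal_rpow hb ht.1,
    show r - N = (D - N) + (r - D) by ring, Real.rpow_add ht.1, ← mul_assoc]
  exact ENNReal.ofReal_le_ofReal (le_mul_of_one_le_right hnonneg hgrow)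

lemma upperMink_eq_zero_of_lt_s9 (hb : Bornology.IsBounded A) {D M r : ℝ}
    (hlim : Tendsto (fun t => (volume (thickening t A)).toReal * t ^ (D - N)) (𝓝[>] 0) (𝓝 M))
    (hr : D < r) : upperMink N A r = 0 := by
  rw [upperMink]
  simpa [Real.zero_rpow (sub_ne_zero.2 hr.ne')] using
    (tendsto_volume_thickening_div_ofReal_rpow hb hlim hr.le).limsup_eq

lemma lowerMink_le_upperMink (r : ℝ) : lowerMink N A r ≤ upperMink N A r :=
  liminf_le_limsup

lemma setOf_lowerMink_eq_zero_eq_Ioi {D : ℝ} (hD : 0 ≤ D) (hzero : ∀ r, D < r → upperMink N A r = 0)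
    (hpos : ∀ r ≤ D, lowerMink N A r ≠ 0) : {r : ℝ | 0 < r ∧ lowerMink N A r = 0} = Ioi D := by
  ext r
  refine ⟨fun ⟨_, hr⟩ => not_le.1 fun hrD => hpos r hrD hr, fun hr => ⟨hD.trans_lt hr, ?_⟩⟩
  exact le_antisymm ((lowerMink_le_upperMink r).trans (hzero r hr).le) bot_le

lemma setOf_upperMink_eq_zero_eq_Ioi {D : ℝ} (hD : 0 ≤ D) (hzero : ∀ r, D < r → upperMink N A r = 0)
    (hpos : ∀ r ≤ D, lowerMink N A r ≠ 0) : {r : ℝ | 0 < r ∧ upperMink N A r = 0} = Ioi D := by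
  ext r
  refine ⟨fun ⟨_, hr⟩ => not_le.1 fun hrD => hpos r hrD ?_, fun hr => ⟨hD.trans_lt hr, hzero r hr⟩⟩
  exact le_antisymm (hr ▸ lowerMink_le_upperMink r) bot_le

end Minkowski

section Mellin

variable {E : Type*} [NormedAddCommGroup E] [NormedSpace ℂ E]

lemma mellinConvergent_indicator_Ioc_iff {f : ℝ → E} {δ : ℝ} {s : ℂ} :
    MellinConvergent ((Ioc 0 δ).indicator f) s ↔
      IntegrableOn (fun t : ℝ => (t : ℂ) ^ (s - 1) • f t) (Ioc 0 δ) := by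
  rw [MellinConvergent, ← indicator_smul, integrableOn_indicator_iff measurableSet_Ioc,
    inter_eq_left.2 Ioc_subset_Ioi_self]

lemma mellin_indicator_Ioc (f : ℝ → E) (δ : ℝ) (s : ℂ) :
    mellin ((Ioc 0 δ).indicator f) s = ∫ t in Ioc 0 δ, (t : ℂ) ^ (s - 1) • f t := by
  rw [mellin, ← indicator_smul, setIntegral_indicator measurableSet_Ioc,
    inter_eq_right.2 Ioc_subset_Ioi_self]

lemma mellinConvergent_and_differentiableAt_indicator_Ioc {f : ℝ → E} {δ b : ℝ} (hδ : 0 < δ)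
    (hf : LocallyIntegrableOn f (Ioi 0)) (hbot : f =O[𝓝[>] 0] (· ^ (-b))) {s : ℂ}
    (hs : b < s.re) :
    MellinConvergent ((Ioc 0 δ).indicator f) s ∧
      DifferentiableAt ℂ (mellin ((Ioc 0 δ).indicator f)) s := by
  have hloc : LocallyIntegrableOn ((Ioc 0 δ).indicator f) (Ioi 0) := by
    rw [locallyIntegrableOn_iff isOpen_Ioi.isLocallyClosed] at hf ⊢
    exact fun k hk hkc => (hf k hk hkc).indicator measurableSet_Ioc
  have htop : (Ioc 0 δ).indicator f =O[atTop] (· ^ (-(s.re + 1))) := by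
    refine (Asymptotics.isBigO_zero _ _).congr' ?_ .rfl
    filter_upwards [eventually_gt_atTop δ] with t ht
    exact (indicator_of_notMem (fun h => ht.not_ge h.2) _).symm
  have hbot' : (Ioc 0 δ).indicator f =O[𝓝[>] 0] (· ^ (-b)) := by
    refine hbot.congr' ?_ .rfl
    filter_upwards [Ioc_mem_nhdsGT hδ] with t ht
    exact (indicator_of_mem ht f).symm
  exact ⟨mellinConvergent_of_isBigO_rpow hloc htop (lt_add_one _) hbot' hs,
    mellin_differentiableAt_of_isBigO_rpow hloc htop (lt_add_one _) hbot' hs⟩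

end Mellin

lemma ofReal_cpow_mul_ofReal_rpow {t : ℝ} (ht : 0 < t) (s : ℂ) (a : ℝ) :
    (t : ℂ) ^ s * ((t ^ a : ℝ) : ℂ) = (t : ℂ) ^ (s + a) := by
  rw [Complex.ofReal_cpow ht.le, Complex.cpow_add _ _ (Complex.ofReal_ne_zero.2 ht.ne')]

lemma integral_Ioc_cpow_sub_one {δ : ℝ} (hδ : 0 ≤ δ) {s : ℂ} (hs : 0 < s.re) :
    ∫ t in Ioc 0 δ, (t : ℂ) ^ (s - 1) = (δ : ℂ) ^ s / s := by
  have hs0 : s ≠ 0 := fun h => by simp [h] at hs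
  rw [← intervalIntegral.integral_of_le hδ, integral_cpow (Or.inl (by simpa using hs)),
    sub_add_cancel, Complex.ofReal_zero, Complex.zero_cpow hs0, sub_zero]

lemma integral_Ioc_cpow_mul_eq_mellin_add {u : ℝ → ℝ} {δ D m : ℝ} (hδ : 0 ≤ δ) {s : ℂ}
    (hs : D < s.re)
    (hconv : MellinConvergent ((Ioc 0 δ).indicator fun t => ((u t - m * t ^ (-D) : ℝ) : ℂ)) s) :
    ∫ t in Ioc 0 δ, (t : ℂ) ^ (s - 1) * u t =
      mellin ((Ioc 0 δ).indicator fun t => ((u t - m * t ^ (-D) : ℝ) : ℂ)) s +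
        m * (δ : ℂ) ^ (s - D) / (s - D) := by
  have hsD : 0 < (s - D).re := by simpa using hs
  have hsplit : ∀ t ∈ Ioc (0 : ℝ) δ, (t : ℂ) ^ (s - 1) * u t =
      (t : ℂ) ^ (s - 1) • ((u t - m * t ^ (-D) : ℝ) : ℂ) + m * (t : ℂ) ^ (s - D - 1) :=
    fun t ht => by
      rw [smul_eq_mul, sub_right_comm, sub_eq_add_neg _ (D : ℂ), ← Complex.ofReal_neg,
        ← ofReal_cpow_mul_ofReal_rpow ht.1]
      push_cast
      ring
  have hmodel : IntegrableOn (fun t : ℝ => (m : ℂ) * (t : ℂ) ^ (s - D - 1)) (Ioc 0 δ) :=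
    ((intervalIntegral.intervalIntegrable_cpow' (by simpa using hsD)).1).const_mul _
  rw [setIntegral_congr_fun measurableSet_Ioc hsplit,
    integral_add (mellinConvergent_indicator_Ioc_iff.1 hconv) hmodel, integral_const_mul,
    integral_Ioc_cpow_sub_one hδ hsD, ← mellin_indicator_Ioc, mul_div_assoc]

theorem exists_continuation_integral_Ioc_cpow_mul {u : ℝ → ℝ} {δ D α m : ℝ} (hδ : 0 < δ)
    (hα : 0 < α) (hu : LocallyIntegrableOn u (Ioi 0))
    (hbot : (fun t => u t - m * t ^ (-D)) =O[𝓝[>] 0] fun t => t ^ (-(D - α))) :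
    ∃ F : ℂ → ℂ, DifferentiableOn ℂ F ({s : ℂ | D - α < s.re} \ {(D : ℂ)}) ∧
      (∀ s : ℂ, D < s.re → F s = ∫ t in Ioc 0 δ, (t : ℂ) ^ (s - 1) * u t) ∧
      Tendsto (fun s => (s - D) * F s) (𝓝[≠] (D : ℂ)) (𝓝 (m : ℂ)) := by
  set f : ℝ → ℂ := (Ioc 0 δ).indicator fun t => ((u t - m * t ^ (-D) : ℝ) : ℂ)
  have hrem : LocallyIntegrableOn (fun t => ((u t - m * t ^ (-D) : ℝ) : ℂ)) (Ioi 0) := by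
    have hreal : LocallyIntegrableOn (fun t => u t - m * t ^ (-D)) (Ioi 0) :=
      hu.sub (ContinuousOn.locallyIntegrableOn (continuousOn_const.mul
        (continuousOn_id.rpow_const fun t ht => Or.inl (ne_of_gt ht))) measurableSet_Ioi)
    rw [locallyIntegrableOn_iff isOpen_Ioi.isLocallyClosed] at hreal ⊢
    exact fun k hk hkc => (hreal k hk hkc).ofReal
  have hmellin : ∀ s : ℂ, D - α < s.re → MellinConvergent f s ∧
      DifferentiableAt ℂ (mellin f) s := fun s hs =>
    mellinConvergent_and_differentiableAt_indicator_Ioc hδ hrem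
      (Complex.isBigO_ofReal_left.2 hbot) hs
  refine ⟨fun s => mellin f s + m * (δ : ℂ) ^ (s - D) / (s - D), ?_, fun s hs =>
    (integral_Ioc_cpow_mul_eq_mellin_add hδ.le hs (hmellin s (by linarith)).1).symm, ?_⟩
  · rintro s ⟨hs, hsD⟩
    have hpole : DifferentiableAt ℂ (fun s : ℂ => m * (δ : ℂ) ^ (s - D) / (s - D)) s :=
      (((differentiableAt_id.sub_const _).const_cpow
        (Or.inl (Complex.ofReal_ne_zero.2 hδ.ne'))).const_mul _).div
        (differentiableAt_id.sub_const _) (sub_ne_zero.2 hsD)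
    exact ((hmellin s hs).2.add hpole).differentiableWithinAt
  · have hmellin_cont : ContinuousAt (mellin f) D :=
      (hmellin D (by simpa using hα)).2.continuousAt
    have hlim : Tendsto (fun s : ℂ => (s - D) * mellin f s + m * (δ : ℂ) ^ (s - D)) (𝓝 (D : ℂ))
        (𝓝 ((D - D) * mellin f D + m * (δ : ℂ) ^ ((D : ℂ) - D))) :=
      (((continuousAt_id.sub continuousAt_const).mul hmellin_cont).add
        (((continuousAt_const_cpow (Complex.ofReal_ne_zero.2 hδ.ne')).comp
          (continuousAt_id.sub continuousAt_const)).const_mul _)).tendsto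
    rw [sub_self, zero_mul, zero_add, Complex.cpow_zero, mul_one] at hlim
    refine (hlim.mono_left nhdsWithin_le_nhds).congr' ?_
    filter_upwards [self_mem_nhdsWithin] with s (hs : s ≠ D)
    field_simp [sub_ne_zero.2 hs]

theorem exists_continuation_integral_Ioc_cpow_sub_mul {V : ℝ → ℝ} {d D α M C t₀ δ : ℝ}
    (hV : Monotone V) (hδ : 0 < δ) (hα : 0 < α) (ht₀ : 0 < t₀)
    (hasymp : ∀ t ∈ Ioo 0 t₀, |V t * t ^ (D - d) - M| ≤ C * t ^ α) :
    ∃ F : ℂ → ℂ, DifferentiableOn ℂ F ({s : ℂ | D - α < s.re} \ {(D : ℂ)}) ∧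
      (∀ s : ℂ, D < s.re → F s = ∫ t in Ioc 0 δ, (t : ℂ) ^ (s - d - 1) * V t) ∧
      Tendsto (fun s => (s - D) * F s) (𝓝[≠] (D : ℂ)) (𝓝 (M : ℂ)) := by
  have hu : LocallyIntegrableOn (fun t => V t * t ^ (-d)) (Ioi 0) :=
    (hV.locallyIntegrable.locallyIntegrableOn _).mul_continuousOn
      (continuousOn_id.rpow_const fun t ht => Or.inl (ne_of_gt ht)) isOpen_Ioi.isLocallyClosed
  have hbot := isBigO_sub_mul_rpow_neg_of_abs_mul_rpow_sub_le (α := α)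
    (u := fun t => V t * t ^ (-d)) ht₀ fun t ht => by
    rw [mul_assoc, ← Real.rpow_add ht.1, neg_add_eq_sub]
    exact hasymp t ht
  obtain ⟨F, hF, hF_eq, hF_res⟩ := exists_continuation_integral_Ioc_cpow_mul hδ hα hu hbot
  refine ⟨F, hF, fun s hs => (hF_eq s hs).trans (setIntegral_congr_fun measurableSet_Ioc
    fun t ht => ?_), hF_res⟩
  rw [Complex.ofReal_mul, mul_left_comm, ofReal_cpow_mul_ofReal_rpow ht.1, mul_comm]
  push_cast
  ring_nf

theorem stmt9_general (N : ℕ) (A : Set (EuclideanSpace ℝ (Fin N)))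
    (hb : Bornology.IsBounded A)
    (D α M C t₀ : ℝ) (hD : 0 ≤ D) (hα : 0 < α) (hM : 0 < M) (ht₀ : 0 < t₀)
    (hasymp : ∀ t ∈ Ioo (0 : ℝ) t₀,
      |(volume (thickening t A)).toReal * t ^ (D - (N : ℝ)) - M| ≤ C * t ^ α) :
    lowerBoxDim N A = D ∧ upperBoxDim N A = D ∧
    lowerMink N A D = ENNReal.ofReal M ∧ upperMink N A D = ENNReal.ofReal M ∧
    ∀ δ : ℝ, 0 < δ →
      sInf {β : ℝ |
          IntegrableOn
            (fun t : ℝ => t ^ (β - (N : ℝ) - 1) * (volume (thickening t A)).toReal)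
            (Ioc 0 δ) volume} = D ∧
      ∃ F : ℂ → ℂ,
        DifferentiableOn ℂ F ({s : ℂ | D - α < s.re} \ {(D : ℂ)}) ∧
        (∀ s : ℂ, D < s.re →
          F s = ∫ t in Ioc (0 : ℝ) δ,
            (t : ℂ) ^ (s - (N : ℂ) - 1) * ((volume (thickening t A)).toReal : ℂ)) ∧
        Tendsto (fun s : ℂ => (s - (D : ℂ)) * F s) (𝓝[≠] (D : ℂ)) (𝓝 (M : ℂ)) := by
  have hV := monotone_toReal_volume_thickening hb
  have hlim : Tendsto (fun t => (volume (thickening t A)).toReal * t ^ (D - N)) (𝓝[>] 0) (𝓝 M) :=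
    tendsto_nhdsGT_of_abs_sub_le_rpow hα ht₀ hasymp
  have hcontent := tendsto_volume_thickening_div_ofReal_rpow hb hlim le_rfl
  rw [sub_self, Real.rpow_zero, mul_one] at hcontent
  have hzero : ∀ r, D < r → upperMink N A r = 0 := fun r => upperMink_eq_zero_of_lt_s9 hb hlim
  have hpos : ∀ r ≤ D, lowerMink N A r ≠ 0 := fun r hr =>
    ((ENNReal.ofReal_pos.2 hM).trans_le (ofReal_le_lowerMink hb hlim hr)).ne'
  refine ⟨by rw [lowerBoxDim, setOf_lowerMink_eq_zero_eq_Ioi hD hzero hpos, csInf_Ioi],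
    by rw [upperBoxDim, setOf_upperMink_eq_zero_eq_Ioi hD hzero hpos, csInf_Ioi],
    hcontent.liminf_eq, hcontent.limsup_eq,
    fun δ hδ => ⟨sInf_setOf_integrableOn_Ioc_rpow_mul hV hM hδ hlim, ?_⟩⟩
  simpa using exists_continuation_integral_Ioc_cpow_sub_mul hV hδ hα ht₀ hasymp

/-- Minkowski measurable case: if `|A_t| = t^{N−D}(M + O(t^α))` as `t → 0⁺`,
then `dim_B A = D`, `A` is Minkowski measurable with content `M`, and for every `δ > 0` the tube
zeta function has abscissa of convergence `D` and a meromorphic continuation `F` to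
`{Re s > D − α}` whose only pole there is a simple pole at `s = D` with residue `M`. -/
theorem stmt9 (N : ℕ) (hN : 1 ≤ N) (A : Set (EuclideanSpace ℝ (Fin N)))
    (hA : A.Nonempty) (hb : Bornology.IsBounded A)
    (D α M C t₀ : ℝ) (hD : 0 ≤ D) (hα : 0 < α) (hM : 0 < M) (hC : 0 < C) (ht₀ : 0 < t₀)
    (hasymp : ∀ t ∈ Ioo (0 : ℝ) t₀,
      |(volume (thickening t A)).toReal * t ^ (D - (N : ℝ)) - M| ≤ C * t ^ α) :
    lowerBoxDim N A = D ∧ upperBoxDim N A = D ∧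
    lowerMink N A D = ENNReal.ofReal M ∧ upperMink N A D = ENNReal.ofReal M ∧
    ∀ δ : ℝ, 0 < δ →
      sInf {β : ℝ |
          IntegrableOn
            (fun t : ℝ => t ^ (β - (N : ℝ) - 1) * (volume (thickening t A)).toReal)
            (Ioc 0 δ) volume} = D ∧
      ∃ F : ℂ → ℂ,
        DifferentiableOn ℂ F ({s : ℂ | D - α < s.re} \ {(D : ℂ)}) ∧
        (∀ s : ℂ, D < s.re →
          F s = ∫ t in Ioc (0 : ℝ) δ,
            (t : ℂ) ^ (s - (N : ℂ) - 1) * ((volume (thickening t A)).toReal : ℂ)) ∧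
        Tendsto (fun s : ℂ => (s - (D : ℂ)) * F s) (𝓝[≠] (D : ℂ)) (𝓝 (M : ℂ)) :=
  stmt9_general N A hb D α M C t₀ hD hα hM ht₀ hasymp
end

section
/- Let δ > 0 and T > 0. Suppose F : (0,δ) → ℝ is continuous, G : ℝ → ℝ satisfies G(τ + T) = G(τ) for all τ ∈ ℝ, and F(t) − G(log(1/t)) → 0 as t → 0⁺. Then G is continuous on ℝ. -/
open Filter Set
open scoped Topology

/-- if `F : (0,δ) → ℝ` is continuous, `G : ℝ → ℝ` is `T`-periodic and
`F(t) − G(log(1/t)) → 0` as `t → 0⁺`, then `G` is continuous on `ℝ`. -/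
theorem stmt11 (δ T : ℝ) (hδ : 0 < δ) (hT : 0 < T) (F G : ℝ → ℝ)
    (hF : ContinuousOn F (Ioo 0 δ))
    (hGper : ∀ τ : ℝ, G (τ + T) = G τ)
    (hlim : Tendsto (fun t : ℝ => F t - G (Real.log (1 / t))) (𝓝[>] (0 : ℝ)) (𝓝 0)) :
    Continuous G := by
  -- periodicity for natural multiples
  have hGn : ∀ (n : ℕ) (τ : ℝ), G (τ + n * T) = G τ := by
    intro n
    induction n with
    | zero => simp
    | succ k ih =>
      intro τ
      have h : τ + ((k : ℕ) + 1 : ℕ) * T = (τ + k * T) + T := by push_cast; ring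
      rw [h, hGper, ih]
  set H : ℝ → ℝ := fun τ => F (Real.exp (-τ)) with hH
  -- limit of H - G at infinity
  have hHlim : Tendsto (fun τ => H τ - G τ) atTop (𝓝 0) := by
    have h1 : Tendsto (fun τ : ℝ => Real.exp (-τ)) atTop (𝓝[>] 0) := by
      apply tendsto_nhdsWithin_of_tendsto_nhds_of_eventually_within
      · exact Real.tendsto_exp_atBot.comp tendsto_neg_atTop_atBot
      · exact Eventually.of_forall fun τ => Real.exp_pos _
    have h2 := hlim.comp h1
    have h3 : (fun t : ℝ => F t - G (Real.log (1 / t))) ∘ (fun τ : ℝ => Real.exp (-τ))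
        = fun τ => H τ - G τ := by
      funext τ
      simp [hH, Function.comp, one_div, Real.log_inv, Real.log_exp]
    rwa [h3] at h2
  -- continuity of H on a ray
  have hHcont : ∀ τ : ℝ, -Real.log δ < τ → ContinuousAt H τ := by
    intro τ hτ
    have hmem : Real.exp (-τ) ∈ Ioo 0 δ := by
      refine ⟨Real.exp_pos _, ?_⟩
      rw [← Real.lt_log_iff_exp_lt hδ]
      linarith
    have hFc : ContinuousAt F (Real.exp (-τ)) :=
      hF.continuousAt (Ioo_mem_nhds hmem.1 hmem.2)
    have hin : ContinuousAt (fun τ : ℝ => Real.exp (-τ)) τ := by fun_prop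
    exact ContinuousAt.comp (f := fun τ : ℝ => Real.exp (-τ)) hFc hin
  rw [continuous_iff_continuousAt]
  intro x
  rw [Metric.continuousAt_iff]
  intro ε hε
  have hε3 : 0 < ε / 3 := by linarith
  obtain ⟨M, hM⟩ := (Metric.tendsto_atTop.mp hHlim) (ε / 3) hε3
  set M' : ℝ := max M (-Real.log δ + 1) with hM'
  obtain ⟨n, hn⟩ := exists_nat_gt ((M' - x) / T)
  have hnT : M' - x < n * T := by
    calc M' - x = ((M' - x) / T) * T := by field_simp
    _ < n * T := by exact mul_lt_mul_of_pos_right hn hT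
  set c : ℝ := x + n * T with hc
  have hcM' : M' < c := by simp only [hc]; linarith
  have hcdom : -Real.log δ < c := by
    have : -Real.log δ + 1 ≤ M' := le_max_right _ _
    linarith
  obtain ⟨r, hr, hrH⟩ := Metric.continuousAt_iff.mp (hHcont c hcdom) (ε / 3) hε3
  refine ⟨min r (c - M'), lt_min hr (by linarith), ?_⟩
  intro y hy
  have hy1 : dist y x < r := lt_of_lt_of_le hy (min_le_left _ _)
  have hy2 : dist y x < c - M' := lt_of_lt_of_le hy (min_le_right _ _)
  have hdyc : dist (y + n * T) c = dist y x := by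
    simp only [hc, Real.dist_eq]
    ring_nf
  have hynT : M ≤ y + n * T := by
    have : |y - x| < c - M' := by rwa [Real.dist_eq] at hy2
    have h1 : x - y < c - M' := by
      have := abs_lt.mp this
      linarith [this.1]
    have h2 : M ≤ M' := le_max_left _ _
    simp only [hc] at h1 ⊢
    linarith
  have hcM : M ≤ c := le_trans (le_max_left _ _) (le_of_lt hcM')
  have e1 : dist (G (y + n * T)) (H (y + n * T)) < ε / 3 := by
    have := hM (y + n * T) hynT
    rw [Real.dist_eq, sub_zero] at this
    rw [Real.dist_eq, abs_sub_comm]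
    exact this
  have e2 : dist (H (y + n * T)) (H c) < ε / 3 := hrH (by rw [hdyc]; exact hy1)
  have e3 : dist (H c) (G c) < ε / 3 := by
    have := hM c hcM
    rwa [Real.dist_eq, sub_zero, ← Real.dist_eq] at this
  have hGy : G y = G (y + n * T) := (hGn n y).symm
  have hGx : G x = G c := (hGn n x).symm
  calc dist (G y) (G x) = dist (G (y + n * T)) (G c) := by rw [hGy, hGx]
  _ ≤ dist (G (y + n * T)) (H (y + n * T)) + dist (H (y + n * T)) (H c) + dist (H c) (G c) :=
      dist_triangle4 _ _ _ _
  _ < ε / 3 + ε / 3 + ε / 3 := by gcongr  -- add_lt_add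
  _ = ε := by ring
end

section
/- Let ℓ = (ℓ_j)_{j≥1} be a bounded fractal string, let J ≥ 2 and let r_1, …, r_J ∈ (0,1) satisfy ∑_{j=1}^J r_j < 1, and let D ∈ (0,1) be the unique real number with ∑_{j=1}^J r_j^D = 1. Consider the extended self-similar fractal string obtained from ℓ and the ratio list {r_1,…,r_J}, indexed by pairs (w, j) where w ranges over all finite words in {1,…,J} and j ∈ ℕ, with lengths (∏_{i ∈ w} r_i)·ℓ_j. Then: (1) its total length is (∑_{j≥1} ℓ_j)/(1 − ∑_{j=1}^J r_j); (2) for every s ∈ ℂ with Re s > max{D(ζ_ℓ), D}, the sum ∑_{(w,j)} ((∏_{i∈w} r_i) ℓ_j)^s converges absolutely and equals ζ_ℓ(s)/(1 − ∑_{j=1}^J r_j^s); (3) the abscissa of convergence inf{α > 0 : ∑_{(w,j)} ((∏_{i∈w} r_i) ℓ_j)^α < ∞} equals max{D(ζ_ℓ), D}. -/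
/-!
Grouping words by length, the words of length `n` contribute `(∑ i, f i) ^ n`, so the sum of
`∏_{i ∈ w} f i` over all words is the geometric series `(1 - ∑ i, f i)⁻¹`, absolutely convergent
as soon as `∑ i, ‖f i‖ < 1` (and, for nonnegative `f`, only then). The extended string is the
product of this word family (with `f = r ^ s`) and of `ℓ ^ s`, which gives the total length and
the factorisation of its zeta function. For real `α`, a product of two positive families is
summable iff both factors are, and `∑ i, r i ^ α < 1 ↔ D < α` because the Moran sum is strictly
decreasing in `α`. The exponents for which `∑ ℓ_j ^ α` converges form an up-ray (as `ℓ_j → 0`),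
so cutting it down to `(D, ∞)` moves its infimum to `max (D(ζ_ℓ)) D`.
-/

open Set

section Words

variable {ι : Type*}

lemma sum_prod_tuple_eq_pow [Fintype ι] {R : Type*} [CommSemiring R] (f : ι → R) (n : ℕ) :
    ∑ v : Fin n → ι, ∏ i, f (v i) = (∑ i, f i) ^ n := by
  rw [Finset.sum_pow', Fintype.piFinset_univ]

lemma list_prod_map_equivSigmaTuple_symm {M : Type*} [CommMonoid M] (f : ι → M)
    (σ : Σ n, Fin n → ι) :
    ((List.equivSigmaTuple.symm σ).map f).prod = ∏ i, f (σ.2 i) := by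
  simp [List.equivSigmaTuple, List.map_ofFn, List.prod_ofFn]

variable [Fintype ι]

theorem summable_list_prod_map_iff {c : ι → ℝ} (hc : ∀ i, 0 ≤ c i) :
    Summable (fun w : List ι => (w.map c).prod) ↔ ∑ i, c i < 1 := by
  rw [← List.equivSigmaTuple.symm.summable_iff]
  simp only [Function.comp_def, list_prod_map_equivSigmaTuple_symm]
  rw [summable_sigma_of_nonneg fun σ => Finset.prod_nonneg fun i _ => hc _]
  simp only [tsum_fintype, sum_prod_tuple_eq_pow]
  rw [summable_geometric_iff_norm_lt_one, Real.norm_of_nonneg (Finset.sum_nonneg fun i _ => hc i)]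
  exact and_iff_right fun n => .of_finite

variable {𝕜 : Type*} [NormedField 𝕜]

theorem summable_norm_list_prod_map {f : ι → 𝕜} (hf : ∑ i, ‖f i‖ < 1) :
    Summable fun w : List ι => ‖(w.map f).prod‖ := by
  simpa only [List.norm_prod, List.map_map, Function.comp_def] using
    (summable_list_prod_map_iff fun i => norm_nonneg (f i)).2 hf

theorem hasSum_list_prod_map [CompleteSpace 𝕜] {f : ι → 𝕜} (hf : ∑ i, ‖f i‖ < 1) :
    HasSum (fun w : List ι => (w.map f).prod) (1 - ∑ i, f i)⁻¹ := by
  have hs := List.equivSigmaTuple.symm.summable_iff.2 (summable_norm_list_prod_map hf).of_norm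
  rw [← List.equivSigmaTuple.symm.hasSum_iff]
  simp only [Function.comp_def, list_prod_map_equivSigmaTuple_symm] at hs ⊢
  refine .sigma_of_hasSum (hasSum_geometric_of_norm_lt_one ?_) (fun n => ?_) hs
  · exact (norm_sum_le _ _).trans_lt hf
  · simpa only [sum_prod_tuple_eq_pow] using hasSum_fintype fun v : Fin n → ι => ∏ i, f (v i)

theorem summable_norm_list_prod_map_mul {κ : Type*} {f : ι → 𝕜} {g : κ → 𝕜}
    (hf : ∑ i, ‖f i‖ < 1) (hg : Summable fun j => ‖g j‖) :
    Summable fun p : List ι × κ => ‖(p.1.map f).prod * g p.2‖ :=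
  (summable_norm_list_prod_map hf).mul_norm hg

theorem tsum_list_prod_map_mul [CompleteSpace 𝕜] {κ : Type*} {f : ι → 𝕜} {g : κ → 𝕜}
    (hf : ∑ i, ‖f i‖ < 1) (hg : Summable fun j => ‖g j‖) :
    ∑' p : List ι × κ, (p.1.map f).prod * g p.2 = (∑' j, g j) / (1 - ∑ i, f i) := by
  rw [← tsum_mul_tsum_of_summable_norm (f := fun w : List ι => (w.map f).prod)
    (summable_norm_list_prod_map hf) hg, (hasSum_list_prod_map hf).tsum_eq, div_eq_inv_mul]

end Words

theorem List.prod_map_nonneg {ι R : Type*} [CommMonoidWithZero R] [PartialOrder R]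
    [ZeroLEOneClass R] [PosMulMono R] (l : List ι) {f : ι → R} (hf : ∀ i, 0 ≤ f i) :
    0 ≤ (l.map f).prod :=
  List.prod_nonneg (List.forall_mem_map.2 fun i _ => hf i)

theorem list_prod_map_ofReal_cpow {ι : Type*} (l : List ι) {f : ι → ℝ} (hf : ∀ i, 0 ≤ f i)
    (s : ℂ) : (l.map fun i => (f i : ℂ) ^ s).prod = ((l.map f).prod : ℂ) ^ s := by
  induction l with
  | nil => simp
  | cons a l ih =>
    simp only [List.map_cons, List.prod_cons, Complex.ofReal_mul, ih]
    rw [Complex.mul_cpow_ofReal_nonneg (hf a) (l.prod_map_nonneg hf)]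

theorem summable_mul_prod_iff_of_pos {α β : Type*} [Nonempty α] [Nonempty β] {f : α → ℝ}
    {g : β → ℝ} (hf : ∀ a, 0 < f a) (hg : ∀ b, 0 < g b) :
    Summable (fun p : α × β => f p.1 * g p.2) ↔ Summable f ∧ Summable g := by
  refine ⟨fun h => ⟨?_, ?_⟩,
    fun h => h.1.mul_of_nonneg h.2 (fun a => (hf a).le) fun b => (hg b).le⟩
  · obtain ⟨b⟩ := ‹Nonempty β›
    exact (summable_mul_right_iff (hg b).ne').1 (h.comp_injective (Prod.mk_left_injective b))
  · obtain ⟨a⟩ := ‹Nonempty α›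
    exact (summable_mul_left_iff (hf a).ne').1 (h.comp_injective (Prod.mk_right_injective a))

theorem Summable.rpow_of_le {κ : Type*} {f : κ → ℝ} (hf : ∀ j, 0 ≤ f j) {α β : ℝ} (hα : 0 < α)
    (hαβ : α ≤ β) (hs : Summable fun j => f j ^ α) : Summable fun j => f j ^ β := by
  refine hs.of_norm_bounded_eventually ?_
  filter_upwards [hs.tendsto_cofinite_zero.eventually (gt_mem_nhds one_pos)] with j hj
  rw [Real.norm_of_nonneg (Real.rpow_nonneg (hf j) β)]
  have hj1 : f j ≤ 1 := by
    by_contra! h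
    exact (Real.one_lt_rpow h hα).not_gt hj
  exact Real.rpow_le_rpow_of_exponent_ge' (hf j) hj1 hα.le hαβ

theorem csInf_inter_Ioi_of_isUpperSet {S : Set ℝ} (hne : S.Nonempty) (hbdd : BddBelow S)
    (hS : IsUpperSet S) (D : ℝ) : sInf (S ∩ Ioi D) = max (sInf S) D := by
  have hmem : ∀ b, max (sInf S) D < b → b ∈ S ∩ Ioi D := fun b hb => by
    obtain ⟨a, haS, hab⟩ := exists_lt_of_csInf_lt hne ((le_max_left _ _).trans_lt hb)
    exact ⟨hS hab.le haS, (le_max_right _ _).trans_lt hb⟩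
  refine le_antisymm (le_of_forall_gt_imp_ge_of_dense fun b hb =>
    csInf_le (hbdd.mono inter_subset_left) (hmem b hb)) ?_
  refine le_csInf ⟨_, hmem _ (lt_add_one _)⟩ fun a ha => max_le ?_ ha.2.le
  exact csInf_le hbdd ha.1

theorem sum_rpow_lt_one_iff {ι : Type*} [Fintype ι] {r : ι → ℝ} (hr : ∀ i, r i ∈ Ioo (0 : ℝ) 1)
    {D : ℝ} (hD : ∑ i, r i ^ D = 1) (t : ℝ) : ∑ i, r i ^ t < 1 ↔ D < t := by
  have : Nonempty ι := by
    by_contra! h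
    simp at hD
  have hanti : StrictAnti fun t : ℝ => ∑ i, r i ^ t := fun a b hab =>
    Finset.sum_lt_sum_of_nonempty Finset.univ_nonempty fun i _ =>
      Real.rpow_lt_rpow_of_exponent_gt (hr i).1 (hr i).2 hab
  rw [← hD]
  exact hanti.lt_iff_gt

namespace FractalString

variable {ι κ : Type*}

def extendedString (r : ι → ℝ) (ℓ : κ → ℝ) (p : List ι × κ) : ℝ := (p.1.map r).prod * ℓ p.2

def summableExponents (f : κ → ℝ) : Set ℝ := {α | 0 < α ∧ Summable fun j => f j ^ α}

noncomputable def abscissa (f : κ → ℝ) : ℝ := sInf (summableExponents f)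

section Abscissa

variable {f : κ → ℝ}

theorem isUpperSet_summableExponents (hf : ∀ j, 0 ≤ f j) : IsUpperSet (summableExponents f) :=
  fun _ _ hab ha => ⟨ha.1.trans_le hab, ha.2.rpow_of_le hf ha.1 hab⟩

theorem one_mem_summableExponents (hsum : Summable f) : 1 ∈ summableExponents f :=
  ⟨one_pos, by simpa only [Real.rpow_one] using hsum⟩

theorem summable_rpow_of_abscissa_lt (hf : ∀ j, 0 ≤ f j) (hsum : Summable f) {β : ℝ}
    (hβ : abscissa f < β) : Summable fun j => f j ^ β := by
  obtain ⟨α, hα, hαβ⟩ := exists_lt_of_csInf_lt ⟨1, one_mem_summableExponents hsum⟩ hβ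
  exact (isUpperSet_summableExponents hf hαβ.le hα).2

end Abscissa

variable {r : ι → ℝ} {ℓ : κ → ℝ}

theorem extendedString_rpow (hr : ∀ i, 0 ≤ r i) (hℓ : ∀ j, 0 ≤ ℓ j) (α : ℝ) (p : List ι × κ) :
    extendedString r ℓ p ^ α = extendedString (r · ^ α) (ℓ · ^ α) p := by
  rw [extendedString, extendedString, Real.mul_rpow (p.1.prod_map_nonneg hr) (hℓ _),
    Real.list_prod_map_rpow' _ _ (fun i _ => hr i)]

theorem ofReal_extendedString_cpow (hr : ∀ i, 0 ≤ r i) (hℓ : ∀ j, 0 ≤ ℓ j) (s : ℂ)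
    (p : List ι × κ) :
    (extendedString r ℓ p : ℂ) ^ s = (p.1.map fun i => (r i : ℂ) ^ s).prod * (ℓ p.2 : ℂ) ^ s := by
  rw [extendedString, Complex.ofReal_mul,
    Complex.mul_cpow_ofReal_nonneg (p.1.prod_map_nonneg hr) (hℓ _),
    list_prod_map_ofReal_cpow _ hr]

variable [Fintype ι]

theorem summable_extendedString (hr : ∀ i, 0 ≤ r i) (hrsum : ∑ i, r i < 1) (hℓ : ∀ j, 0 ≤ ℓ j)
    (hsum : Summable ℓ) : Summable (extendedString r ℓ) :=
  ((summable_list_prod_map_iff hr).2 hrsum).mul_of_nonneg hsum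
    (fun w => w.prod_map_nonneg hr) hℓ

theorem tsum_extendedString (hr : ∀ i, 0 ≤ r i) (hrsum : ∑ i, r i < 1) (hℓ : ∀ j, 0 ≤ ℓ j)
    (hsum : Summable ℓ) : ∑' p, extendedString r ℓ p = (∑' j, ℓ j) / (1 - ∑ i, r i) := by
  have hrsum' : ∑ i, ‖r i‖ < 1 := by simpa only [Real.norm_of_nonneg (hr _)] using hrsum
  exact tsum_list_prod_map_mul (f := r) (g := ℓ) hrsum'
    (by simpa only [Real.norm_of_nonneg (hℓ _)] using hsum)

theorem summable_norm_extendedString_cpow (hr : ∀ i, 0 < r i) (hℓ : ∀ j, 0 < ℓ j) {s : ℂ}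
    (hrs : ∑ i, r i ^ s.re < 1) (hℓs : Summable fun j => ℓ j ^ s.re) :
    Summable fun p => ‖(extendedString r ℓ p : ℂ) ^ s‖ := by
  simp only [ofReal_extendedString_cpow (fun i => (hr i).le) (fun j => (hℓ j).le)]
  exact summable_norm_list_prod_map_mul (f := fun i => (r i : ℂ) ^ s)
    (g := fun j => (ℓ j : ℂ) ^ s)
    (by simpa only [Complex.norm_cpow_eq_rpow_re_of_pos (hr _)] using hrs)
    (by simpa only [Complex.norm_cpow_eq_rpow_re_of_pos (hℓ _)] using hℓs)

theorem tsum_extendedString_cpow (hr : ∀ i, 0 < r i) (hℓ : ∀ j, 0 < ℓ j) {s : ℂ}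
    (hrs : ∑ i, r i ^ s.re < 1) (hℓs : Summable fun j => ℓ j ^ s.re) :
    ∑' p, (extendedString r ℓ p : ℂ) ^ s = (∑' j, (ℓ j : ℂ) ^ s) / (1 - ∑ i, (r i : ℂ) ^ s) := by
  simp only [ofReal_extendedString_cpow (fun i => (hr i).le) (fun j => (hℓ j).le)]
  exact tsum_list_prod_map_mul (f := fun i => (r i : ℂ) ^ s) (g := fun j => (ℓ j : ℂ) ^ s)
    (by simpa only [Complex.norm_cpow_eq_rpow_re_of_pos (hr _)] using hrs)
    (by simpa only [Complex.norm_cpow_eq_rpow_re_of_pos (hℓ _)] using hℓs)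

theorem summable_extendedString_rpow_iff [Nonempty κ] (hr : ∀ i, 0 < r i) (hℓ : ∀ j, 0 < ℓ j)
    (α : ℝ) : Summable (fun p => extendedString r ℓ p ^ α) ↔
      ∑ i, r i ^ α < 1 ∧ Summable fun j => ℓ j ^ α := by
  have hrα : ∀ i, 0 < r i ^ α := fun i => Real.rpow_pos_of_pos (hr i) α
  have hw : ∀ w : List ι, 0 < (w.map (r · ^ α)).prod := fun w =>
    List.prod_pos (List.forall_mem_map.2 fun i _ => hrα i)
  simp only [extendedString_rpow (fun i => (hr i).le) (fun j => (hℓ j).le)]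
  exact (summable_mul_prod_iff_of_pos hw fun j => Real.rpow_pos_of_pos (hℓ j) α).trans
    (and_congr_left' (summable_list_prod_map_iff fun i => (hrα i).le))

theorem summableExponents_extendedString [Nonempty κ] (hr : ∀ i, r i ∈ Ioo (0 : ℝ) 1) {D : ℝ}
    (hD : ∑ i, r i ^ D = 1) (hℓ : ∀ j, 0 < ℓ j) :
    summableExponents (extendedString r ℓ) = summableExponents ℓ ∩ Ioi D := by
  ext α
  simp only [summableExponents, mem_inter_iff, mem_ofPred_eq, mem_Ioi,
    summable_extendedString_rpow_iff (fun i => (hr i).1) hℓ, sum_rpow_lt_one_iff hr hD]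
  tauto

theorem abscissa_extendedString [Nonempty κ] (hr : ∀ i, r i ∈ Ioo (0 : ℝ) 1) {D : ℝ}
    (hD : ∑ i, r i ^ D = 1) (hℓ : ∀ j, 0 < ℓ j) (hsum : Summable ℓ) :
    abscissa (extendedString r ℓ) = max (abscissa ℓ) D := by
  rw [abscissa, summableExponents_extendedString hr hD hℓ]
  exact csInf_inter_Ioi_of_isUpperSet ⟨1, one_mem_summableExponents hsum⟩
    ⟨0, fun α hα => hα.1.le⟩ (isUpperSet_summableExponents fun j => (hℓ j).le) D

end FractalString

theorem stmt14_general (ℓ : ℕ → ℝ) (hpos : ∀ j, 0 < ℓ j) (hsum : Summable ℓ)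
    (J : ℕ) (r : Fin J → ℝ) (hr : ∀ j, r j ∈ Ioo (0 : ℝ) 1)
    (hrsum : ∑ j, r j < 1)
    (D : ℝ) (hMoran : ∑ j, r j ^ D = 1) :
    Summable (fun p : List (Fin J) × ℕ => (p.1.map r).prod * ℓ p.2) ∧
    ∑' p : List (Fin J) × ℕ, (p.1.map r).prod * ℓ p.2 =
      (∑' j : ℕ, ℓ j) / (1 - ∑ j, r j) ∧
    (∀ s : ℂ, max (sInf {α : ℝ | 0 < α ∧ Summable fun j => ℓ j ^ α}) D < s.re →
      Summable (fun p : List (Fin J) × ℕ => ‖(((p.1.map r).prod * ℓ p.2 : ℝ) : ℂ) ^ s‖) ∧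
      ∑' p : List (Fin J) × ℕ, (((p.1.map r).prod * ℓ p.2 : ℝ) : ℂ) ^ s =
        (∑' j : ℕ, (ℓ j : ℂ) ^ s) / (1 - ∑ j, (r j : ℂ) ^ s)) ∧
    sInf {α : ℝ | 0 < α ∧ Summable fun p : List (Fin J) × ℕ => ((p.1.map r).prod * ℓ p.2) ^ α} =
      max (sInf {α : ℝ | 0 < α ∧ Summable fun j => ℓ j ^ α}) D := by
  open FractalString in
  have hr0 : ∀ i, 0 < r i := fun i => (hr i).1
  have hℓ0 : ∀ j, 0 ≤ ℓ j := fun j => (hpos j).le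
  refine ⟨summable_extendedString (fun i => (hr0 i).le) hrsum hℓ0 hsum,
    tsum_extendedString (fun i => (hr0 i).le) hrsum hℓ0 hsum, fun s hs => ?_,
    abscissa_extendedString hr hMoran hpos hsum⟩
  have hrs : ∑ i, r i ^ s.re < 1 :=
    (sum_rpow_lt_one_iff hr hMoran _).2 ((le_max_right _ _).trans_lt hs)
  have hℓs : Summable fun j => ℓ j ^ s.re :=
    summable_rpow_of_abscissa_lt hℓ0 hsum ((le_max_left _ _).trans_lt hs)
  exact ⟨summable_norm_extendedString_cpow hr0 hpos hrs hℓs,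
    tsum_extendedString_cpow hr0 hpos hrs hℓs⟩

/-- properties of the extended self-similar fractal string
`ℓ ⊗ L(r_1,…,r_J)`, indexed by pairs `(w, j)` of a finite word `w` in the alphabet `{1,…,J}`
and an index `j`, with lengths `(∏_{i∈w} r_i)·ℓ_j`: total length, geometric zeta function,
and abscissa of convergence. -/
theorem stmt14 (ℓ : ℕ → ℝ) (hpos : ∀ j, 0 < ℓ j) (hanti : Antitone ℓ) (hsum : Summable ℓ)
    (J : ℕ) (hJ : 2 ≤ J) (r : Fin J → ℝ) (hr : ∀ j, r j ∈ Ioo (0 : ℝ) 1)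
    (hrsum : ∑ j, r j < 1)
    (D : ℝ) (hD : D ∈ Ioo (0 : ℝ) 1) (hMoran : ∑ j, r j ^ D = 1) :
    Summable (fun p : List (Fin J) × ℕ => (p.1.map r).prod * ℓ p.2) ∧
    ∑' p : List (Fin J) × ℕ, (p.1.map r).prod * ℓ p.2 =
      (∑' j : ℕ, ℓ j) / (1 - ∑ j, r j) ∧
    (∀ s : ℂ, max (sInf {α : ℝ | 0 < α ∧ Summable fun j => ℓ j ^ α}) D < s.re →
      Summable (fun p : List (Fin J) × ℕ => ‖(((p.1.map r).prod * ℓ p.2 : ℝ) : ℂ) ^ s‖) ∧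
      ∑' p : List (Fin J) × ℕ, (((p.1.map r).prod * ℓ p.2 : ℝ) : ℂ) ^ s =
        (∑' j : ℕ, (ℓ j : ℂ) ^ s) / (1 - ∑ j, (r j : ℂ) ^ s)) ∧
    sInf {α : ℝ | 0 < α ∧ Summable fun p : List (Fin J) × ℕ => ((p.1.map r).prod * ℓ p.2) ^ α} =
      max (sInf {α : ℝ | 0 < α ∧ Summable fun j => ℓ j ^ α}) D :=
  stmt14_general ℓ hpos hsum J r hr hrsum D hMoran
end
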